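/- arXiv:2512.24025 — 10 statements merged into one kernel-verified Lean document; each statement's English description precedes it below -/
import Mathlib

section
/- A filtered vector space (V, ℓ) over a field κ satisfies the best approximation property if and only if the image ℓ(V ∖ {0}) is a well-ordered subset of ℝ. -/
universe u v

/-- `ℓ` is a filtration function making `(V, ℓ)` a filtered vector space over `κ`:
`ℓ v = ⊥` (i.e. `-∞`) iff `v = 0`; `ℓ` is invariant under scaling by nonzero scalars;
and `ℓ (v + w) ≤ max (ℓ v) (ℓ w)`. -/
def IsFiltrationFunction (κ : Type u) [Field κ] {V : Type v} [AddCommGroup V] [Module κ V]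
    (ℓ : V → WithBot ℝ) : Prop :=
  (∀ v : V, ℓ v = ⊥ ↔ v = 0) ∧
    (∀ (c : κ) (v : V), c ≠ 0 → ℓ (c • v) = ℓ v) ∧
      ∀ v w : V, ℓ (v + w) ≤ max (ℓ v) (ℓ w)

/-- The best approximation property of a filtered vector space `(V, ℓ)`: for every
subspace `W` and every `v ∉ W` there is a best approximation `w₀ ∈ W` to `v`. -/
def HasBestApprox (κ : Type u) [Field κ] {V : Type v} [AddCommGroup V] [Module κ V]
    (ℓ : V → WithBot ℝ) : Prop :=
  ∀ (W : Submodule κ V) (v : V), v ∉ W → ∃ w₀ ∈ W, ∀ w ∈ W, ℓ (v - w₀) ≤ ℓ (v - w)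

/-- A subset of `ℝ` is well-ordered if every nonempty subset of it has a least element. -/
def WellOrderedSubset (s : Set ℝ) : Prop :=
  ∀ t : Set ℝ, t ⊆ s → t.Nonempty → ∃ a ∈ t, ∀ b ∈ t, a ≤ b

/-! If the values of `ℓ` are well-ordered, the least value of `ℓ` on the coset `v - W` is attained
at a best approximation. Conversely, let `ℓ (u n)` be strictly decreasing. Since the values of
the summands are distinct, the ultrametric inequality is an equality on combinations of the `u n`:
`ℓ (∑ cᵢ • uᵢ)` is the largest `ℓ (uᵢ)` with `cᵢ ≠ 0`. So the `u n` are linearly independent,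
`u 0 ∉ W := span {u 0 - u n}`, and every `u 0 - w` with `w ∈ W` has a value `ℓ (u m)`, which is
beaten by `u 0 - (u 0 - u (m + 1)) = u (m + 1)`. -/

theorem wellOrderedSubset_iff_isWF {s : Set ℝ} : WellOrderedSubset s ↔ s.IsWF := by
  refine ⟨fun h => Set.isWF_iff_no_descending_seq.2 fun t ht hts => ?_, fun h t hts htne => ?_⟩
  · obtain ⟨_, ⟨n, rfl⟩, hmin⟩ :=
      h (Set.range t) (Set.range_subset_iff.2 hts) (Set.range_nonempty t)
    exact (ht n.lt_succ_self).not_ge (hmin _ ⟨n + 1, rfl⟩)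
  · exact ⟨(h.mono hts).min htne, Set.IsWF.min_mem _ _, fun b hb => Set.IsWF.min_le _ _ hb⟩

theorem LinearIndependent.notMem_span_range_sub {R M ι : Type*} [Ring R] [Nontrivial R]
    [AddCommGroup M] [Module R M] {u : ι → M} (hu : LinearIndependent R u) (i : ι) :
    u i ∉ Submodule.span R (Set.range fun j => u i - u j) := by
  -- The coefficient vectors of the generators `u i - u j` all have coefficient sum zero.
  let σ : (ι →₀ R) →ₗ[R] R := Finsupp.linearCombination R fun _ => 1
  have hle : Submodule.span R (Set.range fun j => u i - u j) ≤
      (LinearMap.ker σ).map (Finsupp.linearCombination R u) := by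
    refine Submodule.span_le.2 ?_
    rintro _ ⟨j, rfl⟩
    exact ⟨Finsupp.single i 1 - Finsupp.single j 1, by simp [σ], by simp⟩
  rintro hmem
  obtain ⟨c, hc, hcu⟩ := hle hmem
  obtain rfl : c = Finsupp.single i 1 := hu (by simpa using hcu)
  simp [σ] at hc

namespace IsFiltrationFunction

variable {κ : Type u} [Field κ] {V : Type v} [AddCommGroup V] [Module κ V] {ℓ : V → WithBot ℝ}

theorem map_eq_bot_iff (hℓ : IsFiltrationFunction κ ℓ) {v : V} : ℓ v = ⊥ ↔ v = 0 := hℓ.1 v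

theorem map_zero (hℓ : IsFiltrationFunction κ ℓ) : ℓ (0 : V) = ⊥ := hℓ.map_eq_bot_iff.2 rfl

theorem map_smul (hℓ : IsFiltrationFunction κ ℓ) {c : κ} (hc : c ≠ 0) (v : V) :
    ℓ (c • v) = ℓ v :=
  hℓ.2.1 c v hc

theorem map_add_le (hℓ : IsFiltrationFunction κ ℓ) (v w : V) : ℓ (v + w) ≤ max (ℓ v) (ℓ w) :=
  hℓ.2.2 v w

theorem map_neg (hℓ : IsFiltrationFunction κ ℓ) (v : V) : ℓ (-v) = ℓ v := by
  simpa using hℓ.map_smul (neg_ne_zero.2 (one_ne_zero' κ)) v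

theorem map_add_eq_max_of_ne (hℓ : IsFiltrationFunction κ ℓ) {v w : V} (h : ℓ v ≠ ℓ w) :
    ℓ (v + w) = max (ℓ v) (ℓ w) := by
  wlog hlt : ℓ w < ℓ v generalizing v w
  · rw [add_comm, max_comm]
    exact this h.symm ((not_lt.1 hlt).lt_of_ne h)
  rw [max_eq_left hlt.le]
  refine le_antisymm ((hℓ.map_add_le v w).trans_eq (max_eq_left hlt.le)) ?_
  have hv : ℓ v ≤ max (ℓ (v + w)) (ℓ w) := by
    simpa [hℓ.map_neg] using hℓ.map_add_le (v + w) (-w)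
  exact (le_max_iff.1 hv).resolve_right hlt.not_ge

theorem map_sum_eq_sup (hℓ : IsFiltrationFunction κ ℓ) {ι : Type*} {s : Finset ι} {f : ι → V}
    (hf : ∀ i ∈ s, ∀ j ∈ s, f i ≠ 0 → ℓ (f i) = ℓ (f j) → i = j) :
    ℓ (∑ i ∈ s, f i) = s.sup (ℓ ∘ f) := by
  classical
  induction s using Finset.induction_on with
  | empty => simp [hℓ.map_zero]
  | @insert a s ha ih =>
    have hfs : ∀ i ∈ s, ∀ j ∈ s, f i ≠ 0 → ℓ (f i) = ℓ (f j) → i = j := fun i hi j hj =>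
      hf i (Finset.mem_insert_of_mem hi) j (Finset.mem_insert_of_mem hj)
    rw [Finset.sum_insert ha, Finset.sup_insert, ← ih hfs]
    by_cases ha0 : f a = 0
    · simp [ha0, hℓ.map_zero]
    refine hℓ.map_add_eq_max_of_ne fun heq => ?_
    rcases s.eq_empty_or_nonempty with rfl | hs
    · exact ha0 (hℓ.map_eq_bot_iff.1 (by simpa [hℓ.map_zero] using heq))
    obtain ⟨j, hj, hjsup⟩ := s.exists_mem_eq_sup hs (ℓ ∘ f)
    rw [ih hfs, hjsup] at heq
    exact ha (hf a (s.mem_insert_self a) j (Finset.mem_insert_of_mem hj) ha0 heq ▸ hj)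

variable {ι : Type*} {u : ι → V}

theorem map_sum_smul_eq_sup (hℓ : IsFiltrationFunction κ ℓ) (hu : Function.Injective (ℓ ∘ u))
    (s : Finset ι) (c : ι → κ) :
    ℓ (∑ i ∈ s, c i • u i) = s.sup fun i => ℓ (c i • u i) := by
  refine hℓ.map_sum_eq_sup fun i _ j _ hi heq => ?_
  have hci : c i ≠ 0 := left_ne_zero_of_smul hi
  by_cases hcj : c j = 0
  · rw [hcj, zero_smul, hℓ.map_zero, hℓ.map_eq_bot_iff] at heq
    exact absurd heq hi
  · exact hu (by simpa [hℓ.map_smul hci, hℓ.map_smul hcj] using heq)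

theorem linearIndependent (hℓ : IsFiltrationFunction κ ℓ) (hu : Function.Injective (ℓ ∘ u))
    (hu0 : ∀ i, u i ≠ 0) :
    LinearIndependent κ u := by
  refine linearIndependent_iff'.2 fun s c hsum i hi => ?_
  have hbot : s.sup (fun i => ℓ (c i • u i)) = ⊥ := by
    rw [← hℓ.map_sum_smul_eq_sup hu, hsum, hℓ.map_zero]
  have hci : c i • u i = 0 := hℓ.map_eq_bot_iff.1 ((Finset.sup_eq_bot_iff _ _).1 hbot i hi)
  exact (smul_eq_zero.1 hci).resolve_right (hu0 i)

theorem exists_map_eq_of_mem_span (hℓ : IsFiltrationFunction κ ℓ)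
    (hu : Function.Injective (ℓ ∘ u)) {x : V} (hx : x ∈ Submodule.span κ (Set.range u))
    (hx0 : x ≠ 0) : ∃ i, ℓ x = ℓ (u i) := by
  obtain ⟨c, rfl⟩ := Finsupp.mem_span_range_iff_exists_finsupp.1 hx
  have hc : c.support.Nonempty := Finsupp.support_nonempty_iff.2 (by rintro rfl; simp at hx0)
  obtain ⟨i, hi, hisup⟩ := c.support.exists_mem_eq_sup hc fun i => ℓ (c i • u i)
  refine ⟨i, ?_⟩
  rw [Finsupp.sum, hℓ.map_sum_smul_eq_sup hu, hisup, hℓ.map_smul (Finsupp.mem_support_iff.1 hi)]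

theorem exists_map_eq_coe (hℓ : IsFiltrationFunction κ ℓ) {v : V} (hv : v ≠ 0) :
    ∃ t : ℝ, ℓ v = t :=
  (WithBot.ne_bot_iff_exists.1 (mt hℓ.map_eq_bot_iff.1 hv)).imp fun _ => Eq.symm

theorem hasBestApprox_of_wellOrderedSubset (hℓ : IsFiltrationFunction κ ℓ)
    (hwo : WellOrderedSubset {t : ℝ | ∃ v : V, v ≠ 0 ∧ ℓ v = (t : WithBot ℝ)}) :
    HasBestApprox κ ℓ := by
  intro W v hv
  have hne : ∀ w ∈ W, v - w ≠ 0 := fun w hw h => hv (sub_eq_zero.1 h ▸ hw)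
  obtain ⟨t₀, ht₀⟩ := hℓ.exists_map_eq_coe (hne 0 W.zero_mem)
  obtain ⟨a, ⟨w₀, hw₀, ha⟩, hmin⟩ :=
    hwo {t : ℝ | ∃ w ∈ W, ℓ (v - w) = t} (fun _ ⟨w, hw, ht⟩ => ⟨v - w, hne w hw, ht⟩)
      ⟨t₀, 0, W.zero_mem, ht₀⟩
  refine ⟨w₀, hw₀, fun w hw => ?_⟩
  obtain ⟨t, ht⟩ := hℓ.exists_map_eq_coe (hne w hw)
  rw [ha, ht]
  exact WithBot.coe_le_coe.2 (hmin t ⟨w, hw, ht⟩)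

theorem not_hasBestApprox_of_strictAnti (hℓ : IsFiltrationFunction κ ℓ) {u : ℕ → V}
    (hu : StrictAnti (ℓ ∘ u)) : ¬HasBestApprox κ ℓ := by
  intro hba
  have hu0 : ∀ n, u n ≠ 0 := fun n h => by
    simpa [h, hℓ.map_zero] using hu n.lt_succ_self
  let W := Submodule.span κ (Set.range fun n => u 0 - u n)
  have hWu : W ≤ Submodule.span κ (Set.range u) := Submodule.span_le.2 <| by
    rintro _ ⟨n, rfl⟩
    exact sub_mem (Submodule.subset_span ⟨0, rfl⟩) (Submodule.subset_span ⟨n, rfl⟩)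
  have hu₀W : u 0 ∉ W := (hℓ.linearIndependent hu.injective hu0).notMem_span_range_sub 0
  obtain ⟨w₀, hw₀, hbest⟩ := hba W (u 0) hu₀W
  obtain ⟨m, hm⟩ := hℓ.exists_map_eq_of_mem_span hu.injective
    (sub_mem (Submodule.subset_span ⟨0, rfl⟩) (hWu hw₀)) (sub_ne_zero.2 fun h => hu₀W (h ▸ hw₀))
  have hle := hbest (u 0 - u (m + 1)) (Submodule.subset_span ⟨m + 1, rfl⟩)
  rw [sub_sub_cancel, hm] at hle
  exact (hu m.lt_succ_self).not_ge hle

end IsFiltrationFunction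

/-- A filtered vector space `(V, ℓ)` over a field `κ` satisfies the best approximation
property if and only if the image `ℓ(V ∖ {0})` is a well-ordered subset of `ℝ`. -/
theorem hasBestApprox_iff_wellOrderedSubset (κ : Type u) [Field κ] {V : Type v}
    [AddCommGroup V] [Module κ V] (ℓ : V → WithBot ℝ) (hℓ : IsFiltrationFunction κ ℓ) :
    HasBestApprox κ ℓ ↔
      WellOrderedSubset {t : ℝ | ∃ v : V, v ≠ 0 ∧ ℓ v = (t : WithBot ℝ)} := by
  refine ⟨fun hba => ?_, hℓ.hasBestApprox_of_wellOrderedSubset⟩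
  rw [wellOrderedSubset_iff_isWF, Set.isWF_iff_no_descending_seq]
  intro t ht hts
  choose u _ hu using hts
  exact hℓ.not_hasBestApprox_of_strictAnti (u := u) (fun m n hmn => by simpa [hu] using ht hmn) hba
end

section
/- Let (V, ℓ) be a filtered vector space over a field κ, let S be an ℓ-orthogonal subset of V, and let W = span(S). Suppose that v ∈ V ∖ W and w₀ ∈ W have the property that ℓ(v − w₀) ≤ ℓ(v − w) for all w ∈ W. Then S ∪ {v − w₀} is still an ℓ-orthogonal subset of V. -/
open scoped Classical

universe u v

/-- `ℓ` is a filtration function making `(V, ℓ)` a filtered vector space over `κ`. -/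
def IsFiltrationFn (κ : Type u) [Field κ] {V : Type v} [AddCommGroup V] [Module κ V]
    (ℓ : V → WithBot ℝ) : Prop :=
  (∀ v : V, ℓ v = ⊥ ↔ v = 0) ∧
    (∀ (c : κ) (v : V), c ≠ 0 → ℓ (c • v) = ℓ v) ∧
      ∀ v w : V, ℓ (v + w) ≤ max (ℓ v) (ℓ w)

/-- A subset `S ⊆ V ∖ {0}` is `ℓ`-orthogonal: for any finitely many distinct elements
`v₁, …, vₙ` of `S` and scalars `c₁, …, cₙ`, `ℓ (∑ cᵢ • vᵢ) = max {ℓ vᵢ : cᵢ ≠ 0}`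
(the max of the empty set being `⊥ = -∞`). -/
def IsOrthogonal (κ : Type u) [Field κ] {V : Type v} [AddCommGroup V] [Module κ V]
    (ℓ : V → WithBot ℝ) (S : Set V) : Prop :=
  (0 : V) ∉ S ∧
    ∀ T : Finset V, (T : Set V) ⊆ S → ∀ c : V → κ,
      ℓ (∑ v ∈ T, c v • v) = (T.filter fun v => c v ≠ 0).sup ℓ

/-!
Write `u = v - w₀` and `W = span S`. For `w ∈ W` the vector `w₀ - w` lies in `W`, so
minimality of `w₀` gives `ℓ u ≤ ℓ (u + w)`; the ultrametric inequality applied to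
`w = (u + w) - u` then gives `ℓ w ≤ ℓ (u + w)`, whence `ℓ (u + w) = max (ℓ u) (ℓ w)`.
By scaling, the same holds for `c • u + w` with `c ≠ 0`, and splitting a combination of
`S ∪ {u}` into its `u`-part and its `S`-part reduces orthogonality of `S ∪ {u}` to that of `S`.
-/

namespace IsFiltrationFn

variable {κ : Type u} [Field κ] {V : Type v} [AddCommGroup V] [Module κ V]
  {ℓ : V → WithBot ℝ}

theorem map_neg (hℓ : IsFiltrationFn κ ℓ) (x : V) : ℓ (-x) = ℓ x := by
  rw [← neg_one_smul κ x]
  exact hℓ.2.1 (-1) x (neg_ne_zero.mpr one_ne_zero)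

theorem map_add_eq_max_of_le (hℓ : IsFiltrationFn κ ℓ) {x y : V} (h : ℓ x ≤ ℓ (x + y)) :
    ℓ (x + y) = max (ℓ x) (ℓ y) := by
  have hy : ℓ y ≤ ℓ (x + y) :=
    calc ℓ y = ℓ ((x + y) + -x) := by rw [add_neg_cancel_comm]
      _ ≤ max (ℓ (x + y)) (ℓ (-x)) := hℓ.2.2 _ _
      _ ≤ ℓ (x + y) := max_le le_rfl (hℓ.map_neg x ▸ h)
  exact le_antisymm (hℓ.2.2 x y) (max_le h hy)

theorem map_smul_add_eq_max (hℓ : IsFiltrationFn κ ℓ) {W : Submodule κ V} {x : V}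
    (hx : ∀ w ∈ W, ℓ (x + w) = max (ℓ x) (ℓ w)) {c : κ} (hc : c ≠ 0) {w : V} (hw : w ∈ W) :
    ℓ (c • x + w) = max (ℓ x) (ℓ w) := by
  rw [show c • x + w = c • (x + c⁻¹ • w) by rw [smul_add, smul_inv_smul₀ hc], hℓ.2.1 _ _ hc,
    hx _ (W.smul_mem _ hw), hℓ.2.1 _ _ (inv_ne_zero hc)]

end IsFiltrationFn

theorem IsOrthogonal.insert_of_map_add_eq_max {κ : Type u} [Field κ] {V : Type v}
    [AddCommGroup V] [Module κ V] {ℓ : V → WithBot ℝ} (hℓ : IsFiltrationFn κ ℓ) {S : Set V}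
    (hS : IsOrthogonal κ ℓ S) {x : V} (hxS : x ∉ Submodule.span κ S)
    (hx : ∀ w ∈ Submodule.span κ S, ℓ (x + w) = max (ℓ x) (ℓ w)) :
    IsOrthogonal κ ℓ (insert x S) := by
  refine ⟨?_, fun T hT c => ?_⟩
  · rintro (h | h)
    · exact hxS (h ▸ Submodule.zero_mem _)
    · exact hS.1 h
  obtain hxT | hxT := (em (x ∈ T)).symm
  · exact hS.2 T (fun y hy => (hT hy).resolve_left (ne_of_mem_of_not_mem hy hxT)) c
  obtain ⟨T, hxT', rfl⟩ : ∃ T', x ∉ T' ∧ T = insert x T' :=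
    ⟨T.erase x, Finset.notMem_erase x T, (Finset.insert_erase hxT).symm⟩
  have hTS : (T : Set V) ⊆ S := fun y hy =>
    (hT (Finset.mem_insert_of_mem hy)).resolve_left (ne_of_mem_of_not_mem hy hxT')
  have hw : ∑ y ∈ T, c y • y ∈ Submodule.span κ S :=
    Submodule.sum_mem _ fun y hy => Submodule.smul_mem _ _ (Submodule.subset_span (hTS hy))
  rw [Finset.sum_insert hxT', Finset.filter_insert]
  split_ifs with hc
  · rw [Finset.sup_insert, hℓ.map_smul_add_eq_max hx hc hw, hS.2 T hTS c]
  · rw [not_not.mp hc, zero_smul, zero_add, hS.2 T hTS c]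

/-- If `S` is an `ℓ`-orthogonal subset, `W = span S`, `v ∉ W`, and `w₀ ∈ W` is a best
approximation to `v` from `W`, then `S ∪ {v - w₀}` is still `ℓ`-orthogonal. -/
theorem isOrthogonal_union_singleton_of_bestApprox (κ : Type u) [Field κ] {V : Type v}
    [AddCommGroup V] [Module κ V] (ℓ : V → WithBot ℝ) (hℓ : IsFiltrationFn κ ℓ)
    (S : Set V) (hS : IsOrthogonal κ ℓ S) (v w₀ : V)
    (hv : v ∉ Submodule.span κ S) (hw₀ : w₀ ∈ Submodule.span κ S)
    (hbest : ∀ w ∈ Submodule.span κ S, ℓ (v - w₀) ≤ ℓ (v - w)) :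
    IsOrthogonal κ ℓ (S ∪ {v - w₀}) := by
  have hnot : v - w₀ ∉ Submodule.span κ S := fun h =>
    hv (by simpa using Submodule.add_mem _ h hw₀)
  have hmax : ∀ w ∈ Submodule.span κ S, ℓ (v - w₀ + w) = max (ℓ (v - w₀)) (ℓ w) := by
    intro w hw
    refine hℓ.map_add_eq_max_of_le ?_
    simpa [sub_sub_eq_add_sub, sub_add_eq_add_sub] using
      hbest (w₀ - w) (Submodule.sub_mem _ hw₀ hw)
  rw [Set.union_singleton]
  exact hS.insert_of_map_add_eq_max hℓ hnot hmax
end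

section
/- Suppose that the filtered vector space (V, ℓ) over a field κ satisfies the best approximation property. Then V has an ℓ-orthogonal subset which is a basis for V. Moreover, if S is an ℓ-orthogonal basis for a subspace W of V, then there is an ℓ-orthogonal basis for V that contains S. -/
/-!
Orthogonal sets are closed under unions of chains, so by Zorn's lemma any orthogonal set `S` lies
in a maximal one `M`. If `M` did not span `V`, take `v ∉ span M` and a best approximation
`w₀ ∈ span M` of `v`; then `u = v - w₀` satisfies `ℓ (u + x) = max (ℓ u) (ℓ x)` for all
`x ∈ span M`, so `insert u M` is still orthogonal, contradicting maximality. Orthogonal sets are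
linearly independent because a vanishing combination has filtration `ℓ 0 = ⊥`.
-/

open scoped Classical

universe u v

/-- `ℓ` is a filtration function making `(V, ℓ)` a filtered vector space over `κ`. -/
def IsFiltrationFun (κ : Type u) [Field κ] {V : Type v} [AddCommGroup V] [Module κ V]
    (ℓ : V → WithBot ℝ) : Prop :=
  (∀ v : V, ℓ v = ⊥ ↔ v = 0) ∧
    (∀ (c : κ) (v : V), c ≠ 0 → ℓ (c • v) = ℓ v) ∧
      ∀ v w : V, ℓ (v + w) ≤ max (ℓ v) (ℓ w)

section

variable {κ : Type u} [Field κ] {V : Type v} [AddCommGroup V] [Module κ V] {ℓ : V → WithBot ℝ}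

namespace IsFiltrationFun

variable (hℓ : IsFiltrationFun κ ℓ)
include hℓ

theorem map_eq_bot_iff {v : V} : ℓ v = ⊥ ↔ v = 0 := hℓ.1 v

theorem map_zero : ℓ 0 = ⊥ := hℓ.map_eq_bot_iff.2 rfl

theorem map_smul {c : κ} (hc : c ≠ 0) (v : V) : ℓ (c • v) = ℓ v := hℓ.2.1 c v hc

theorem map_add_le (v w : V) : ℓ (v + w) ≤ max (ℓ v) (ℓ w) := hℓ.2.2 v w

theorem map_neg (v : V) : ℓ (-v) = ℓ v := by
  rw [← neg_one_smul κ v, hℓ.map_smul (neg_ne_zero.2 one_ne_zero)]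

theorem map_add_eq_max {W : Submodule κ V} {u : V} (hu : ∀ x ∈ W, ℓ u ≤ ℓ (u + x))
    {x : V} (hx : x ∈ W) : ℓ (u + x) = max (ℓ u) (ℓ x) := by
  refine le_antisymm (hℓ.map_add_le u x) (max_le (hu x hx) ?_)
  calc ℓ x = ℓ (u + x + -u) := by rw [add_neg_cancel_comm]
    _ ≤ max (ℓ (u + x)) (ℓ u) := by rw [← hℓ.map_neg u]; exact hℓ.map_add_le _ _
    _ = ℓ (u + x) := max_eq_left (hu x hx)

theorem map_smul_add_eq_max {W : Submodule κ V} {u : V} (hu : ∀ x ∈ W, ℓ u ≤ ℓ (u + x))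
    {c : κ} (hc : c ≠ 0) {x : V} (hx : x ∈ W) : ℓ (c • u + x) = max (ℓ u) (ℓ x) := by
  have hcx : c • u + x = c • (u + c⁻¹ • x) := by rw [smul_add, smul_inv_smul₀ hc]
  rw [hcx, hℓ.map_smul hc, hℓ.map_add_eq_max hu (W.smul_mem _ hx),
    hℓ.map_smul (inv_ne_zero hc)]

end IsFiltrationFun

theorem isOrthogonal_iff {S : Set V} :
    IsOrthogonal κ ℓ S ↔ (0 : V) ∉ S ∧ ∀ T : Finset V, (T : Set V) ⊆ S → ∀ c : V → κ,
      (∀ v ∈ T, c v ≠ 0) → ℓ (∑ v ∈ T, c v • v) = T.sup ℓ := by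
  refine and_congr_right fun _ => ⟨fun h T hT c hc => ?_, fun h T hT c => ?_⟩
  · rw [h T hT c, Finset.filter_true_of_mem hc]
  · have hsum : ∑ v ∈ T with c v ≠ 0, c v • v = ∑ v ∈ T, c v • v :=
      Finset.sum_filter_of_ne fun v _ hv => left_ne_zero_of_smul hv
    rw [← hsum]
    exact h _ ((Finset.coe_subset.2 (Finset.filter_subset _ _)).trans hT) c
      fun v hv => (Finset.mem_filter.1 hv).2

namespace IsOrthogonal

theorem linearIndepOn (hℓ : IsFiltrationFun κ ℓ) {S : Set V} (hS : IsOrthogonal κ ℓ S) :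
    LinearIndepOn κ id S := by
  rw [linearIndepOn_iff]
  intro l hl hl0
  rw [Finsupp.linearCombination_apply, Finsupp.sum] at hl0
  have hsup : l.support.sup ℓ = ⊥ := by
    rw [← (isOrthogonal_iff.1 hS).2 l.support hl l fun v hv => Finsupp.mem_support_iff.1 hv,
      ← hℓ.map_zero, ← hl0]
    rfl
  ext v
  by_contra hv
  have hvS : v ∈ l.support := Finsupp.mem_support_iff.2 hv
  have hv0 : v = 0 := hℓ.map_eq_bot_iff.1 ((Finset.sup_eq_bot_iff _ _).1 hsup v hvS)
  exact hS.1 (hv0 ▸ hl hvS)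

theorem insert (hℓ : IsFiltrationFun κ ℓ) {M : Set V} {u : V} (hM : IsOrthogonal κ ℓ M)
    (huM : u ∉ Submodule.span κ M) (hu : ∀ x ∈ Submodule.span κ M, ℓ u ≤ ℓ (u + x)) :
    IsOrthogonal κ ℓ (insert u M) := by
  rw [isOrthogonal_iff] at hM ⊢
  refine ⟨?_, fun T hT c hc => ?_⟩
  · rintro (h | h)
    exacts [huM (h ▸ zero_mem _), hM.1 h]
  by_cases huT : u ∈ T
  · have hT' : (T.erase u : Set V) ⊆ M := fun v hv =>
      (hT (Finset.mem_of_mem_erase hv)).resolve_left (Finset.ne_of_mem_erase hv)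
    have hsum : ∑ v ∈ T.erase u, c v • v ∈ Submodule.span κ M :=
      Submodule.sum_mem _ fun v hv => Submodule.smul_mem _ _ (Submodule.subset_span (hT' hv))
    rw [← Finset.insert_erase huT, Finset.sum_insert (Finset.notMem_erase u T),
      Finset.sup_insert, hℓ.map_smul_add_eq_max hu (hc u huT) hsum,
      hM.2 _ hT' c fun v hv => hc v (Finset.mem_of_mem_erase hv)]
  · exact hM.2 T (fun v hv => (hT hv).resolve_left (ne_of_mem_of_not_mem hv huT)) c hc

theorem sUnion {𝒞 : Set (Set V)} (h𝒞 : ∀ M ∈ 𝒞, IsOrthogonal κ ℓ M)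
    (hchain : IsChain (· ⊆ ·) 𝒞) (hne : 𝒞.Nonempty) : IsOrthogonal κ ℓ (⋃₀ 𝒞) := by
  refine ⟨fun ⟨M, hM, h0⟩ => (h𝒞 M hM).1 h0, fun T hT c => ?_⟩
  rw [Set.sUnion_eq_biUnion] at hT
  obtain ⟨M, hM, hTM⟩ := hchain.directedOn.exists_mem_subset_of_finset_subset_biUnion hne hT
  exact (h𝒞 M hM).2 T hTM c

end IsOrthogonal

theorem isOrthogonal_empty (hℓ : IsFiltrationFun κ ℓ) : IsOrthogonal κ ℓ (∅ : Set V) :=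
  ⟨Set.notMem_empty 0, fun T hT c => by
    rw [Set.subset_empty_iff, Finset.coe_eq_empty] at hT
    simp [hT, hℓ.map_zero]⟩

theorem HasBestApprox.exists_notMem_le_add (hba : HasBestApprox κ ℓ) {W : Submodule κ V}
    {v : V} (hv : v ∉ W) : ∃ u ∉ W, ∀ x ∈ W, ℓ u ≤ ℓ (u + x) := by
  obtain ⟨w₀, hw₀, hmin⟩ := hba W v hv
  refine ⟨v - w₀, fun h => hv (by simpa using W.add_mem h hw₀), fun x hx => ?_⟩
  simpa [sub_add] using hmin (w₀ - x) (W.sub_mem hw₀ hx)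

theorem span_eq_top_of_maximal_isOrthogonal (hℓ : IsFiltrationFun κ ℓ)
    (hba : HasBestApprox κ ℓ) {M : Set V} (hM : Maximal (IsOrthogonal κ ℓ) M) :
    Submodule.span κ M = ⊤ := by
  by_contra hne
  obtain ⟨v, hv⟩ := SetLike.exists_not_mem_of_ne_top _ hne
  obtain ⟨u, huM, hu⟩ := hba.exists_notMem_le_add hv
  exact huM (Submodule.subset_span (hM.mem_of_prop_insert (hM.prop.insert hℓ huM hu)))

theorem IsOrthogonal.exists_superset_span_eq_top (hℓ : IsFiltrationFun κ ℓ)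
    (hba : HasBestApprox κ ℓ) {S : Set V} (hS : IsOrthogonal κ ℓ S) :
    ∃ S' : Set V, S ⊆ S' ∧ IsOrthogonal κ ℓ S' ∧ Submodule.span κ S' = ⊤ := by
  obtain ⟨M, hSM, hM⟩ := zorn_subset_nonempty {M : Set V | IsOrthogonal κ ℓ M}
    (fun 𝒞 h𝒞 hchain hne => ⟨⋃₀ 𝒞, IsOrthogonal.sUnion h𝒞 hchain hne,
      fun _ => Set.subset_sUnion_of_mem⟩) S hS
  exact ⟨M, hSM, hM.prop, span_eq_top_of_maximal_isOrthogonal hℓ hba hM⟩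

end

/-- If `(V, ℓ)` satisfies the best approximation property then `V` has an `ℓ`-orthogonal
basis; moreover every `ℓ`-orthogonal basis `S` of a subspace `W` extends to an
`ℓ`-orthogonal basis of `V` containing `S`. -/
theorem exists_orthogonal_basis_and_extension (κ : Type u) [Field κ] {V : Type v}
    [AddCommGroup V] [Module κ V] (ℓ : V → WithBot ℝ) (hℓ : IsFiltrationFun κ ℓ)
    (hba : HasBestApprox κ ℓ) :
    (∃ S : Set V, IsOrthogonal κ ℓ S ∧ LinearIndependent κ (fun x : S => (x : V)) ∧
        Submodule.span κ S = ⊤) ∧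
      ∀ (W : Submodule κ V) (S : Set V), IsOrthogonal κ ℓ S →
        LinearIndependent κ (fun x : S => (x : V)) → Submodule.span κ S = W →
        ∃ S' : Set V, S ⊆ S' ∧ IsOrthogonal κ ℓ S' ∧
          LinearIndependent κ (fun x : S' => (x : V)) ∧ Submodule.span κ S' = ⊤ := by
  have extend : ∀ S : Set V, IsOrthogonal κ ℓ S → ∃ S' : Set V, S ⊆ S' ∧
      IsOrthogonal κ ℓ S' ∧ LinearIndependent κ (fun x : S' => (x : V)) ∧
        Submodule.span κ S' = ⊤ := fun S hS => by
    obtain ⟨S', hSS', hS', hspan⟩ := hS.exists_superset_span_eq_top hℓ hba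
    exact ⟨S', hSS', hS', hS'.linearIndepOn hℓ, hspan⟩
  refine ⟨?_, fun W S hS _ _ => extend S hS⟩
  obtain ⟨S', -, hS'⟩ := extend ∅ (isOrthogonal_empty hℓ)
  exact ⟨S', hS'⟩
end

section
/- Let (V, ℓ) be a finite-dimensional filtered vector space over a field κ, and for each t ∈ ℝ let V^{≤t} = {v ∈ V : ℓ(v) ≤ t} and V^{<t} = {v ∈ V : ℓ(v) < t} (these are subspaces of V). A basis {v₁, …, v_d} of V is ℓ-orthogonal if and only if for every t ∈ ℝ the number of indices i ∈ {1, …, d} with ℓ(vᵢ) = t is equal to dim(V^{≤t}/V^{<t}). -/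
open scoped Classical

universe u v

/-- `ℓ` is a filtration function making `(V, ℓ)` a filtered vector space over `κ`. -/
def IsVectorFiltration (κ : Type u) [Field κ] {V : Type v} [AddCommGroup V] [Module κ V]
    (ℓ : V → WithBot ℝ) : Prop :=
  (∀ v : V, ℓ v = ⊥ ↔ v = 0) ∧
    (∀ (c : κ) (v : V), c ≠ 0 → ℓ (c • v) = ℓ v) ∧
      ∀ v w : V, ℓ (v + w) ≤ max (ℓ v) (ℓ w)

/-- The subspace `V^{≤t} = {v : ℓ v ≤ t}`. -/
def sublevelLE (κ : Type u) [Field κ] {V : Type v} [AddCommGroup V] [Module κ V]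
    (ℓ : V → WithBot ℝ) (hℓ : IsVectorFiltration κ ℓ) (t : ℝ) : Submodule κ V where
  carrier := {v : V | ℓ v ≤ (t : WithBot ℝ)}
  zero_mem' := by
    have h0 : ℓ (0 : V) = ⊥ := (hℓ.1 0).mpr rfl
    simp only [Set.mem_setOf_eq, h0]
    exact bot_le
  add_mem' := by
    intro a b ha hb
    exact le_trans (hℓ.2.2 a b) (max_le ha hb)
  smul_mem' := by
    intro c x hx
    rcases eq_or_ne c 0 with hc | hc
    · have h0 : ℓ (0 : V) = ⊥ := (hℓ.1 0).mpr rfl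
      simp only [hc, zero_smul, Set.mem_setOf_eq, h0]
      exact bot_le
    · simpa only [Set.mem_setOf_eq, hℓ.2.1 c x hc] using hx

/-- The subspace `V^{<t} = {v : ℓ v < t}`. -/
def sublevelLT (κ : Type u) [Field κ] {V : Type v} [AddCommGroup V] [Module κ V]
    (ℓ : V → WithBot ℝ) (hℓ : IsVectorFiltration κ ℓ) (t : ℝ) : Submodule κ V where
  carrier := {v : V | ℓ v < (t : WithBot ℝ)}
  zero_mem' := by
    have h0 : ℓ (0 : V) = ⊥ := (hℓ.1 0).mpr rfl
    simp only [Set.mem_setOf_eq, h0]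
    exact WithBot.bot_lt_coe t
  add_mem' := by
    intro a b ha hb
    exact lt_of_le_of_lt (hℓ.2.2 a b) (max_lt ha hb)
  smul_mem' := by
    intro c x hx
    rcases eq_or_ne c 0 with hc | hc
    · have h0 : ℓ (0 : V) = ⊥ := (hℓ.1 0).mpr rfl
      simp only [hc, zero_smul, Set.mem_setOf_eq, h0]
      exact WithBot.bot_lt_coe t
    · simpa only [Set.mem_setOf_eq, hℓ.2.1 c x hc] using hx

/-!
A basis is `ℓ`-orthogonal exactly when each sublevel space `V^{≤t}` is spanned by the basis
vectors of filtration level `≤ t`. In that case `V^{≤t}` and `V^{<t}` have dimensions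
`#{i | ℓ vᵢ ≤ t}` and `#{i | ℓ vᵢ < t}`, and the multiplicity formula is their difference.
Conversely, the multiplicity formula forces every value `ℓ v` of a nonzero vector to be the level
of some basis vector (otherwise `V^{≤ℓ v}/V^{<ℓ v}` would be zero, yet `v` is nonzero in it); so
`V^{<t}` is either `0` or `V^{≤s}` for the largest basis level `s < t`, and induction over the
finitely many basis levels gives `dim V^{≤t} = #{i | ℓ vᵢ ≤ t}`, i.e. the basis vectors of level
`≤ t` span `V^{≤t}`.
-/

open Module Submodule Finset

theorem card_filter_le_eq_card_filter_eq_add {ι α : Type*} [PartialOrder α] (s : Finset ι)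
    (f : ι → α) (a : α) [DecidablePred fun i => f i ≤ a] [DecidablePred fun i => f i = a]
    [DecidablePred fun i => f i < a] :
    #(s.filter fun i => f i ≤ a) = #(s.filter fun i => f i = a) + #(s.filter fun i => f i < a) := by
  have hsplit : s.filter (fun i => f i ≤ a) =
      s.filter (fun i => f i = a) ∪ s.filter (fun i => f i < a) := by
    ext i
    simp [le_iff_eq_or_lt, and_or_left]
  rw [hsplit, card_union_of_disjoint (disjoint_filter.2 fun _ _ h => h ▸ lt_irrefl _)]

variable {κ : Type u} [Field κ] {V : Type v} [AddCommGroup V] [Module κ V] {ℓ : V → WithBot ℝ}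

namespace IsVectorFiltration

theorem map_zero (hℓ : IsVectorFiltration κ ℓ) : ℓ 0 = ⊥ := (hℓ.1 0).2 rfl

theorem exists_coe_eq (hℓ : IsVectorFiltration κ ℓ) {v : V} (hv : v ≠ 0) : ∃ s : ℝ, ℓ v = s := by
  obtain ⟨s, hs⟩ := WithBot.ne_bot_iff_exists.1 (mt (hℓ.1 v).1 hv)
  exact ⟨s, hs.symm⟩

theorem map_sum_le (hℓ : IsVectorFiltration κ ℓ) {ι : Type*} (s : Finset ι) (f : ι → V) :
    ℓ (∑ i ∈ s, f i) ≤ s.sup fun i => ℓ (f i) := by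
  induction s using Finset.cons_induction with
  | empty => simp [hℓ.map_zero]
  | cons a s ha ih =>
    rw [sum_cons, sup_cons]
    exact (hℓ.2.2 _ _).trans (sup_le_sup le_rfl ih)

end IsVectorFiltration

section Sublevels

variable (hℓ : IsVectorFiltration κ ℓ)

@[simp]
theorem mem_sublevelLT {v : V} {t : ℝ} : v ∈ sublevelLT κ ℓ hℓ t ↔ ℓ v < t := Iff.rfl

theorem sublevelLT_le_sublevelLE (t : ℝ) : sublevelLT κ ℓ hℓ t ≤ sublevelLE κ ℓ hℓ t :=
  fun _ hv => le_of_lt (α := WithBot ℝ) hv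

theorem sublevelLT_eq_sublevelLE {s t : ℝ} (hst : s < t) (h : ∀ v, ℓ v < t → ℓ v ≤ s) :
    sublevelLT κ ℓ hℓ t = sublevelLE κ ℓ hℓ s :=
  le_antisymm (fun v hv => h v hv) fun _ hv => lt_of_le_of_lt hv (WithBot.coe_lt_coe.2 hst)

abbrev gradedPiece (t : ℝ) : Type v :=
  ↥(sublevelLE κ ℓ hℓ t) ⧸ comap (sublevelLE κ ℓ hℓ t).subtype (sublevelLT κ ℓ hℓ t)

variable [FiniteDimensional κ V]

theorem finrank_gradedPiece_add_finrank_sublevelLT (t : ℝ) :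
    finrank κ (gradedPiece hℓ t) + finrank κ (sublevelLT κ ℓ hℓ t) =
      finrank κ (sublevelLE κ ℓ hℓ t) := by
  rw [← (comapSubtypeEquivOfLe (sublevelLT_le_sublevelLE hℓ t)).finrank_eq]
  exact finrank_quotient_add_finrank _

theorem finrank_gradedPiece_pos {v : V} {t : ℝ} (hv : ℓ v = t) :
    0 < finrank κ (gradedPiece hℓ t) := by
  refine finrank_pos_iff_exists_ne_zero.2 ⟨Submodule.Quotient.mk ⟨v, hv.le⟩, ?_⟩
  rw [Ne, Submodule.Quotient.mk_eq_zero, mem_comap, subtype_apply, mem_sublevelLT, hv]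
  exact lt_irrefl _

end Sublevels

section Families

variable (hℓ : IsVectorFiltration κ ℓ) {ι : Type*}

def SpansSublevels (b : ι → V) : Prop :=
  ∀ t : ℝ, sublevelLE κ ℓ hℓ t ≤ span κ (b '' {i | ℓ (b i) ≤ t})

theorem span_image_le_sublevelLE (b : ι → V) (t : ℝ) :
    span κ (b '' {i | ℓ (b i) ≤ t}) ≤ sublevelLE κ ℓ hℓ t :=
  span_le.2 fun _ ⟨_, hi, hv⟩ => hv ▸ hi

theorem span_image_le_sublevelLT (b : ι → V) (t : ℝ) :
    span κ (b '' {i | ℓ (b i) < t}) ≤ sublevelLT κ ℓ hℓ t :=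
  span_le.2 fun _ ⟨_, hi, hv⟩ => hv ▸ hi

variable {hℓ}

theorem SpansSublevels.sublevelLT_le {b : ι → V} (h : SpansSublevels hℓ b) (t : ℝ) :
    sublevelLT κ ℓ hℓ t ≤ span κ (b '' {i | ℓ (b i) < t}) := by
  intro v hv
  obtain rfl | hv0 := eq_or_ne v 0
  · exact zero_mem _
  obtain ⟨s, hs⟩ := hℓ.exists_coe_eq hv0
  refine span_mono (Set.image_mono fun i hi => ?_) (h s hs.le)
  exact lt_of_le_of_lt (α := WithBot ℝ) hi (hs ▸ (mem_sublevelLT hℓ).1 hv)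

end Families

namespace Module.Basis

variable {ι : Type*} (b : Basis ι κ V)

theorem support_repr_sum_smul (s : Finset ι) (c : ι → κ) :
    (b.repr (∑ i ∈ s, c i • b i)).support = s.filter fun i => c i ≠ 0 := by
  ext i
  simp [map_sum, Finsupp.finsetSum_apply, Finsupp.single_apply]

theorem sum_support_repr_smul (v : V) : ∑ i ∈ (b.repr v).support, b.repr v i • b i = v := by
  conv_rhs => rw [← b.linearCombination_repr v, Finsupp.linearCombination_apply, Finsupp.sum]

theorem isOrthogonal_range_iff :
    IsOrthogonal κ ℓ (Set.range b) ↔ ∀ v, ℓ v = (b.repr v).support.sup fun i => ℓ (b i) := by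
  refine ⟨fun h v => ?_, fun h => ⟨fun ⟨i, hi⟩ => b.ne_zero i hi, fun T hT c => ?_⟩⟩
  · have key := h.2 ((b.repr v).support.image b) (by simp) (Function.extend b (b.repr v) 0)
    rw [sum_image b.injective.injOn, filter_image, sup_image] at key
    simp only [b.injective.extend_apply] at key
    rwa [b.sum_support_repr_smul, filter_true_of_mem fun i hi => Finsupp.mem_support_iff.1 hi]
      at key
  · obtain ⟨s, rfl⟩ : ∃ s : Finset ι, s.image b = T := ⟨T.preimage b b.injective.injOn, by
      rw [image_preimage, filter_true_of_mem fun w hw => hT hw]⟩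
    rw [sum_image b.injective.injOn, filter_image, sup_image, h, b.support_repr_sum_smul]
    rfl

theorem isOrthogonal_range_iff_spansSublevels (hℓ : IsVectorFiltration κ ℓ) :
    IsOrthogonal κ ℓ (Set.range b) ↔ SpansSublevels hℓ b := by
  rw [b.isOrthogonal_range_iff]
  refine ⟨fun h t v hv => b.mem_span_image.2 fun i hi => ?_, fun h v => ?_⟩
  · exact (le_sup (f := fun i => ℓ (b i)) hi).trans ((h v).ge.trans hv)
  have hle : ℓ v ≤ (b.repr v).support.sup fun i => ℓ (b i) :=
    calc ℓ v = ℓ (∑ i ∈ (b.repr v).support, b.repr v i • b i) := by rw [b.sum_support_repr_smul]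
      _ ≤ (b.repr v).support.sup fun i => ℓ (b.repr v i • b i) := hℓ.map_sum_le _ _
      _ = (b.repr v).support.sup fun i => ℓ (b i) :=
        sup_congr rfl fun i hi => hℓ.2.1 _ _ (Finsupp.mem_support_iff.1 hi)
  refine hle.antisymm (Finset.sup_le fun i hi => le_of_not_gt fun hlt => ?_)
  -- a coefficient of level `t = ℓ (b i)` cannot survive in `V^{<t}`
  obtain ⟨t, ht⟩ := hℓ.exists_coe_eq (b.ne_zero i)
  have hv : v ∈ span κ (b '' {j | ℓ (b j) < t}) :=
    h.sublevelLT_le t ((mem_sublevelLT hℓ).2 (ht ▸ hlt))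
  exact (b.mem_span_image.1 hv hi : ℓ (b i) < t).ne ht

end Module.Basis

section Counting

variable (hℓ : IsVectorFiltration κ ℓ) {ι : Type*} [Fintype ι] (b : Basis ι κ V)

theorem Module.Basis.finrank_span_image (p : ι → Prop) [DecidablePred p] :
    finrank κ (span κ (b '' {i | p i})) = #(univ.filter p) := by
  rw [Set.image_eq_range]
  exact (finrank_span_eq_card (b.linearIndependent.comp _ Subtype.val_injective)).trans
    (Fintype.card_subtype _)

namespace SpansSublevels

variable {hℓ} {b}

theorem finrank_sublevelLE (h : SpansSublevels hℓ b) (t : ℝ) :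
    finrank κ (sublevelLE κ ℓ hℓ t) = #(univ.filter fun i => ℓ (b i) ≤ t) := by
  rw [← (span_image_le_sublevelLE hℓ b t).antisymm (h t), b.finrank_span_image]

theorem finrank_sublevelLT (h : SpansSublevels hℓ b) (t : ℝ) :
    finrank κ (sublevelLT κ ℓ hℓ t) = #(univ.filter fun i => ℓ (b i) < t) := by
  rw [← (span_image_le_sublevelLT hℓ b t).antisymm (h.sublevelLT_le t), b.finrank_span_image]

theorem card_eq_finrank_gradedPiece (h : SpansSublevels hℓ b) (t : ℝ) :
    #(univ.filter fun i => ℓ (b i) = t) = finrank κ (gradedPiece hℓ t) := by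
  have := Module.Finite.of_basis b
  have hdim := finrank_gradedPiece_add_finrank_sublevelLT hℓ t
  have hcard := card_filter_le_eq_card_filter_eq_add univ (fun i => ℓ (b i)) (t : WithBot ℝ)
  rw [h.finrank_sublevelLE, h.finrank_sublevelLT] at hdim
  omega

end SpansSublevels

namespace Module.Basis

variable {hℓ}

theorem exists_eq_of_card_eq_finrank_gradedPiece
    (hc : ∀ t : ℝ, #(univ.filter fun i => ℓ (b i) = t) = finrank κ (gradedPiece hℓ t))
    {v : V} (hv : v ≠ 0) : ∃ i, ℓ (b i) = ℓ v := by
  have := Module.Finite.of_basis b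
  obtain ⟨s, hs⟩ := hℓ.exists_coe_eq hv
  obtain ⟨i, hi⟩ := card_pos.1 ((hc s).symm ▸ finrank_gradedPiece_pos hℓ hs)
  exact ⟨i, (mem_filter.1 hi).2.trans hs.symm⟩

theorem finrank_sublevelLE_of_card_eq_finrank_gradedPiece
    (hc : ∀ t : ℝ, #(univ.filter fun i => ℓ (b i) = t) = finrank κ (gradedPiece hℓ t)) (t : ℝ) :
    finrank κ (sublevelLE κ ℓ hℓ t) = #(univ.filter fun i => ℓ (b i) ≤ t) := by
  have := Module.Finite.of_basis b
  induction hn : #(univ.filter fun i => ℓ (b i) < t) using Nat.strong_induction_on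
    generalizing t with
  | _ n ih =>
  suffices hlt : finrank κ (sublevelLT κ ℓ hℓ t) = #(univ.filter fun i => ℓ (b i) < t) by
    have hdim := finrank_gradedPiece_add_finrank_sublevelLT hℓ t
    have hcard := card_filter_le_eq_card_filter_eq_add univ (fun i => ℓ (b i)) (t : WithBot ℝ)
    have := hc t
    omega
  obtain hempty | hne := (univ.filter fun i => ℓ (b i) < t).eq_empty_or_nonempty
  · have hbot : sublevelLT κ ℓ hℓ t = ⊥ := eq_bot_iff.2 fun v hv => by
      by_contra hv0
      obtain ⟨i, hi⟩ := b.exists_eq_of_card_eq_finrank_gradedPiece hc hv0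
      exact filter_eq_empty_iff.1 hempty (mem_univ i) (hi ▸ hv)
    rw [hbot, finrank_bot, hempty, card_empty]
  obtain ⟨i₀, hi₀, hmax⟩ := exists_max_image _ (fun i => ℓ (b i)) hne
  obtain ⟨s, hs⟩ := hℓ.exists_coe_eq (b.ne_zero i₀)
  have hst : s < t := WithBot.coe_lt_coe.1 (hs ▸ (mem_filter.1 hi₀).2)
  have hbelow : ∀ i, ℓ (b i) < t ↔ ℓ (b i) ≤ s := fun i =>
    ⟨fun h => hs ▸ hmax i (mem_filter.2 ⟨mem_univ i, h⟩),
      fun h => h.trans_lt (WithBot.coe_lt_coe.2 hst)⟩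
  have hsub : sublevelLT κ ℓ hℓ t = sublevelLE κ ℓ hℓ s :=
    sublevelLT_eq_sublevelLE hℓ hst fun v hv => by
      obtain rfl | hv0 := eq_or_ne v 0
      · simp [hℓ.map_zero]
      obtain ⟨i, hi⟩ := b.exists_eq_of_card_eq_finrank_gradedPiece hc hv0
      exact hi ▸ (hbelow i).1 (hi ▸ hv)
  have hcard : #(univ.filter fun i => ℓ (b i) < s) < n := by
    refine hn ▸ card_lt_card ((ssubset_iff_of_subset fun i hi => ?_).2 ⟨i₀, hi₀, ?_⟩)
    · exact mem_filter.2 ⟨mem_univ i, (hbelow i).2 (mem_filter.1 hi).2.le⟩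
    · exact fun hi => (mem_filter.1 hi).2.ne hs
  rw [hsub, ih _ hcard s rfl]
  exact congrArg card (filter_congr fun i _ => (hbelow i).symm)

theorem spansSublevels_of_card_eq_finrank_gradedPiece
    (hc : ∀ t : ℝ, #(univ.filter fun i => ℓ (b i) = t) = finrank κ (gradedPiece hℓ t)) :
    SpansSublevels hℓ b := fun t =>
  have := Module.Finite.of_basis b
  (eq_of_le_of_finrank_le (span_image_le_sublevelLE hℓ b t) (by
    rw [b.finrank_span_image, b.finrank_sublevelLE_of_card_eq_finrank_gradedPiece hc])).ge

end Module.Basis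

end Counting

theorem orthogonal_basis_iff_multiplicity_general (κ : Type u) [Field κ] {V : Type v}
    [AddCommGroup V] [Module κ V] (ℓ : V → WithBot ℝ)
    (hℓ : IsVectorFiltration κ ℓ) {d : ℕ} (b : Module.Basis (Fin d) κ V) :
    IsOrthogonal κ ℓ (Set.range fun i => b i) ↔
      ∀ t : ℝ,
        (Finset.univ.filter fun i : Fin d => ℓ (b i) = (t : WithBot ℝ)).card =
          Module.finrank κ
            (↥(sublevelLE κ ℓ hℓ t) ⧸
              Submodule.comap (sublevelLE κ ℓ hℓ t).subtype (sublevelLT κ ℓ hℓ t)) := by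
  rw [b.isOrthogonal_range_iff_spansSublevels hℓ]
  exact ⟨SpansSublevels.card_eq_finrank_gradedPiece,
    b.spansSublevels_of_card_eq_finrank_gradedPiece⟩

/-- For a finite-dimensional filtered vector space `(V, ℓ)`, a basis `{v₁, …, v_d}` is
`ℓ`-orthogonal iff for every `t ∈ ℝ` the number of `i` with `ℓ (vᵢ) = t` equals
`dim (V^{≤t} / V^{<t})`. -/
theorem orthogonal_basis_iff_multiplicity (κ : Type u) [Field κ] {V : Type v}
    [AddCommGroup V] [Module κ V] [FiniteDimensional κ V] (ℓ : V → WithBot ℝ)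
    (hℓ : IsVectorFiltration κ ℓ) {d : ℕ} (b : Module.Basis (Fin d) κ V) :
    IsOrthogonal κ ℓ (Set.range fun i => b i) ↔
      ∀ t : ℝ,
        (Finset.univ.filter fun i : Fin d => ℓ (b i) = (t : WithBot ℝ)).card =
          Module.finrank κ
            (↥(sublevelLE κ ℓ hℓ t) ⧸
              Submodule.comap (sublevelLE κ ℓ hℓ t).subtype (sublevelLT κ ℓ hℓ t)) :=
  orthogonal_basis_iff_multiplicity_general κ ℓ hℓ b
end

section
/- Let (V, ℓ) be a finite-dimensional filtered vector space over a field κ, let {v₁, …, v_d} be an ℓ-orthogonal basis of V, and let {w₁, …, w_d} be another basis of V. Then {w₁, …, w_d} is ℓ-orthogonal if and only if the multisets {ℓ(v₁), …, ℓ(v_d)} and {ℓ(w₁), …, ℓ(w_d)} are equal. -/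
open scoped Classical

universe u v

/-- `ℓ` is a filtration function making `(V, ℓ)` a filtered vector space over `κ`. -/
def IsFiltration' (κ : Type u) [Field κ] {V : Type v} [AddCommGroup V] [Module κ V]
    (ℓ : V → WithBot ℝ) : Prop :=
  (∀ v : V, ℓ v = ⊥ ↔ v = 0) ∧
    (∀ (c : κ) (v : V), c ≠ 0 → ℓ (c • v) = ℓ v) ∧
      ∀ v w : V, ℓ (v + w) ≤ max (ℓ v) (ℓ w)

/-! For a threshold `t`, the sublevel set `{v | ℓ v ≤ t}` is a subspace containing the span of
the basis vectors of level `≤ t`. A basis is orthogonal exactly when these spans exhaust the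
sublevel subspaces, i.e. when for every `t` the number of basis vectors of level `≤ t` equals the
dimension of the sublevel subspace. These numbers form the cumulative distribution function of
the multiset of levels, which determines that multiset. -/

namespace Multiset
variable {α : Type*} [LinearOrder α]

theorem count_add_countP_lt (s : Multiset α) (a : α) :
    s.count a + s.countP (· < a) = s.countP (· ≤ a) := by
  induction s using Multiset.induction_on with
  | empty => simp
  | cons x s ih =>
    simp only [count_cons, countP_cons]
    rcases lt_trichotomy x a with h | rfl | h <;> grind

theorem eq_iff_forall_countP_le {s t : Multiset α} :
    s = t ↔ ∀ a, s.countP (· ≤ a) = t.countP (· ≤ a) := by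
  refine ⟨fun h _ => h ▸ rfl, fun h => ?_⟩
  have hlt : ∀ a, s.countP (· < a) = t.countP (· < a) := by
    intro a
    obtain hB | hB := ((s + t).toFinset.filter (· < a)).eq_empty_or_nonempty
    · have h0 : ∀ x ∈ s + t, ¬ x < a := fun x hx hxa =>
        Finset.eq_empty_iff_forall_notMem.mp hB x (by simp_all)
      rw [countP_eq_zero.mpr fun x hx => h0 x (mem_add.mpr (.inl hx)),
        countP_eq_zero.mpr fun x hx => h0 x (mem_add.mpr (.inr hx))]
    · -- below `a`, the elements of `s + t` are those `≤ b`, for the largest such `b < a`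
      set b := ((s + t).toFinset.filter (· < a)).max' hB
      have hb : b < a := (Finset.mem_filter.mp (Finset.max'_mem _ hB)).2
      have lt_iff_le_b : ∀ x ∈ s + t, (x < a) = (x ≤ b) := fun x hx => propext
        ⟨fun hxa => Finset.le_max' _ x (by simp_all), fun hxb => hxb.trans_lt hb⟩
      rw [countP_congr rfl fun x hx => lt_iff_le_b x (mem_add.mpr (.inl hx)),
        countP_congr rfl fun x hx => lt_iff_le_b x (mem_add.mpr (.inr hx)), h b]
  ext a
  have := s.count_add_countP_lt a
  have := t.count_add_countP_lt a
  have := hlt a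
  have := h a
  omega

end Multiset

section

variable {κ : Type u} [Field κ] {V : Type v} [AddCommGroup V] [Module κ V]
  {ℓ : V → WithBot ℝ} {ι : Type*}

namespace IsFiltration'

theorem map_zero (hℓ : IsFiltration' κ ℓ) : ℓ 0 = ⊥ := (hℓ.1 0).mpr rfl

theorem sum_le (hℓ : IsFiltration' κ ℓ) (s : Finset ι) (f : ι → V) :
    ℓ (∑ i ∈ s, f i) ≤ s.sup fun i => ℓ (f i) := by
  induction s using Finset.cons_induction with
  | empty => simp [hℓ.map_zero]
  | cons a s _ ih =>
    rw [Finset.sum_cons, Finset.sup_cons]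
    exact (hℓ.2.2 _ _).trans (max_le_max le_rfl ih)

def sublevel (hℓ : IsFiltration' κ ℓ) (t : WithBot ℝ) : Submodule κ V where
  carrier := {v | ℓ v ≤ t}
  add_mem' hv hw := (hℓ.2.2 _ _).trans (max_le hv hw)
  zero_mem' := by simp [hℓ.map_zero]
  smul_mem' c v hv := by
    by_cases hc : c = 0
    · simp [hc, hℓ.map_zero]
    · simpa [hℓ.2.1 c v hc] using hv

@[simp]
theorem mem_sublevel {hℓ : IsFiltration' κ ℓ} {t : WithBot ℝ} {v : V} :
    v ∈ hℓ.sublevel t ↔ ℓ v ≤ t := Iff.rfl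

theorem span_image_le_sublevel (hℓ : IsFiltration' κ ℓ) (u : ι → V) (t : WithBot ℝ) :
    Submodule.span κ (u '' {i | ℓ (u i) ≤ t}) ≤ hℓ.sublevel t := by
  rw [Submodule.span_le]
  rintro _ ⟨i, hi, rfl⟩
  exact hi

end IsFiltration'

theorem isOrthogonal_range_iff {u : ι → V} (hu : Function.Injective u)
    (h0 : ∀ i, u i ≠ 0) :
    IsOrthogonal κ ℓ (Set.range u) ↔ ∀ (J : Finset ι) (c : ι → κ),
      ℓ (∑ i ∈ J, c i • u i) = (J.filter (c · ≠ 0)).sup fun i => ℓ (u i) := by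
  constructor
  · intro h J c
    have h' := h.2 (J.image u) (by simp) (Function.extend u c 0)
    simpa only [Finset.sum_image hu.injOn, Finset.filter_image, Finset.sup_image,
      hu.extend_apply, Function.comp_def] using h'
  · refine fun h => ⟨fun ⟨i, hi⟩ => h0 i hi, fun T hT c => ?_⟩
    obtain ⟨J, -, rfl⟩ := Finset.subset_set_image_iff.mp (Set.image_univ ▸ hT)
    simpa only [Finset.sum_image hu.injOn, Finset.filter_image, Finset.sup_image,
      Function.comp_def] using h J (c ∘ u)

theorem isOrthogonal_basis_iff_sublevel_eq_span (hℓ : IsFiltration' κ ℓ)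
    (u : Module.Basis ι κ V) :
    IsOrthogonal κ ℓ (Set.range u) ↔
      ∀ t, hℓ.sublevel t = Submodule.span κ (u '' {i | ℓ (u i) ≤ t}) := by
  rw [isOrthogonal_range_iff u.injective u.ne_zero]
  constructor
  · intro h t
    refine le_antisymm (fun v hv => ?_) (hℓ.span_image_le_sublevel u t)
    have hv_eq := h (u.repr v).support (u.repr v)
    have hv_sum : ∑ i ∈ (u.repr v).support, u.repr v i • u i = v := u.linearCombination_repr v
    rw [Finset.filter_true_of_mem fun i hi => Finsupp.mem_support_iff.mp hi, hv_sum] at hv_eq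
    rw [u.mem_span_image]
    exact fun i hi => (Finset.le_sup (f := fun i => ℓ (u i)) hi).trans (hv_eq ▸ hv)
  · intro h J c
    set v := ∑ i ∈ J, c i • u i
    refine le_antisymm ?_ (Finset.sup_le fun j hj => ?_)
    · calc ℓ v = ℓ (∑ i ∈ J.filter (c · ≠ 0), c i • u i) := by
            rw [Finset.sum_filter_of_ne (p := (c · ≠ 0)) fun i _ h hc => h (by simp [hc])]
        _ ≤ _ := hℓ.sum_le _ _
        _ = _ := Finset.sup_congr rfl fun i hi => hℓ.2.1 _ _ (Finset.mem_filter.mp hi).2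
    · have hv : v ∈ Submodule.span κ (u '' {i | ℓ (u i) ≤ ℓ v}) := by
        rw [← h]; exact IsFiltration'.mem_sublevel.mpr le_rfl
      obtain ⟨hjJ, hcj⟩ := Finset.mem_filter.mp hj
      have hrepr : u.repr v j = c j := by
        simp [v, map_sum, u.repr_self, Finsupp.single_apply, hjJ]
      exact (u.mem_span_image.mp hv) (Finsupp.mem_support_iff.mpr (hrepr ▸ hcj))

theorem LinearIndependent.finrank_span_image_setOf [Fintype ι] {u : ι → V}
    (hu : LinearIndependent κ u) (p : ι → Prop) [DecidablePred p] :
    Module.finrank κ (Submodule.span κ (u '' {i | p i})) = (Finset.univ.filter p).card := by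
  rw [Set.image_eq_range, ← Fintype.card_subtype]
  exact finrank_span_eq_card (hu.comp _ Subtype.val_injective)

theorem isOrthogonal_basis_iff_card_eq_finrank [Fintype ι] (hℓ : IsFiltration' κ ℓ)
    (u : Module.Basis ι κ V) :
    IsOrthogonal κ ℓ (Set.range u) ↔
      ∀ t, (Finset.univ.filter fun i => ℓ (u i) ≤ t).card =
        Module.finrank κ (hℓ.sublevel t) := by
  have : FiniteDimensional κ V := .of_basis u
  rw [isOrthogonal_basis_iff_sublevel_eq_span hℓ u]
  refine forall_congr' fun t => ?_
  rw [← u.linearIndependent.finrank_span_image_setOf]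
  exact ⟨fun h => h ▸ rfl, fun h =>
    (Submodule.eq_of_le_of_finrank_eq (hℓ.span_image_le_sublevel u t) h).symm⟩

end

theorem orthogonal_basis_iff_multiset_eq_general (κ : Type u) [Field κ] {V : Type v}
    [AddCommGroup V] [Module κ V] (ℓ : V → WithBot ℝ)
    (hℓ : IsFiltration' κ ℓ) {d : ℕ} (b w : Module.Basis (Fin d) κ V)
    (hb : IsOrthogonal κ ℓ (Set.range fun i => b i)) :
    IsOrthogonal κ ℓ (Set.range fun i => w i) ↔
      (Finset.univ.val.map fun i : Fin d => ℓ (b i)) =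
        (Finset.univ.val.map fun i : Fin d => ℓ (w i)) := by
  have hb_card := (isOrthogonal_basis_iff_card_eq_finrank hℓ b).mp hb
  rw [isOrthogonal_basis_iff_card_eq_finrank hℓ w, Multiset.eq_iff_forall_countP_le]
  simp only [Multiset.countP_map, ← Finset.filter_val, Finset.card_val, hb_card]
  exact forall_congr' fun t => eq_comm

/-- For a finite-dimensional filtered vector space `(V, ℓ)`, given an `ℓ`-orthogonal
basis `{v₁, …, v_d}` and another basis `{w₁, …, w_d}`, the latter is `ℓ`-orthogonal iff
the multisets `{ℓ v₁, …, ℓ v_d}` and `{ℓ w₁, …, ℓ w_d}` coincide. -/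
theorem orthogonal_basis_iff_multiset_eq (κ : Type u) [Field κ] {V : Type v}
    [AddCommGroup V] [Module κ V] [FiniteDimensional κ V] (ℓ : V → WithBot ℝ)
    (hℓ : IsFiltration' κ ℓ) {d : ℕ} (b w : Module.Basis (Fin d) κ V)
    (hb : IsOrthogonal κ ℓ (Set.range fun i => b i)) :
    IsOrthogonal κ ℓ (Set.range fun i => w i) ↔
      (Finset.univ.val.map fun i : Fin d => ℓ (b i)) =
        (Finset.univ.val.map fun i : Fin d => ℓ (w i)) :=
  orthogonal_basis_iff_multiset_eq_general κ ℓ hℓ b w hb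
end

section
/- For any extended pseudometric space (X, d), any subset Δ ⊆ X, and any multisets s : I → X and t : J → X of elements of X, the bottleneck distance equals the maximum of the two bottleneck hemidistances: d_∞^{Δ}(s, t) = max(δ_∞^{Δ}(s, t), δ_∞^{Δ}(t, s)). -/
open scoped Classical ENNReal

universe u v w

/-- An `ε`-matching between the multisets `s : I → X` and `t : J → X` relative to `Δ`. -/
def IsMatching {X : Type u} (dX : X → X → ℝ≥0∞) (Δ : Set X) {I : Type v} {J : Type w}
    (s : I → X) (t : J → X) (ε : ℝ≥0∞) : Prop :=
  ∃ (I' : Set I) (J' : Set J) (σ : I' → J'),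
    Function.Bijective σ ∧
    (∀ i : I', dX (s ↑i) (t ↑(σ i)) ≤ ε) ∧
    (∀ i : I, i ∉ I' → ∃ y ∈ Δ, dX (s i) y ≤ ε) ∧
    ∀ j : J, j ∉ J' → ∃ y ∈ Δ, dX (t j) y ≤ ε

/-- An `ε`-embedding of the multiset `s : I → X` into `t : J → X` relative to `Δ`. -/
def IsEmbeddingInto {X : Type u} (dX : X → X → ℝ≥0∞) (Δ : Set X) {I : Type v} {J : Type w}
    (s : I → X) (t : J → X) (ε : ℝ≥0∞) : Prop :=
  ∃ (I' : Set I) (σ : I' → J),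
    Function.Injective σ ∧
    (∀ i : I', dX (s ↑i) (t (σ i)) ≤ ε) ∧
    ∀ i : I, i ∉ I' → ∃ y ∈ Δ, dX (s i) y ≤ ε

/-- The bottleneck distance relative to `Δ`. -/
noncomputable def bottleneckDist {X : Type u} (dX : X → X → ℝ≥0∞) (Δ : Set X)
    {I : Type v} {J : Type w} (s : I → X) (t : J → X) : ℝ≥0∞ :=
  sInf {ε : ℝ≥0∞ | IsMatching dX Δ s t ε}

/-- The bottleneck hemidistance relative to `Δ`. -/
noncomputable def bottleneckHemi {X : Type u} (dX : X → X → ℝ≥0∞) (Δ : Set X)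
    {I : Type v} {J : Type w} (s : I → X) (t : J → X) : ℝ≥0∞ :=
  sInf {ε : ℝ≥0∞ | IsEmbeddingInto dX Δ s t ε}

/-! Two `ε`-embeddings, `σ` of `s` into `t` and `τ` of `t` into `s`, are glued into an
`ε`-matching by the Schröder–Bernstein argument for partial injections. Take a set `S` of indices
of `s` such that `i ∈ S` iff every `b` with `τ b = i` is `σ a` for some `a ∈ S` (a fixed point of a
monotone map). Match the points of `S` along `σ` and the others backwards along `τ`; the points
of `S` outside the domain of `σ` stay unmatched, which is allowed since they are `ε`-close to `Δ`.
The fixed point property makes this injective and lets it reach the whole domain of `τ`, so the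
unmatched points of `t` are also `ε`-close to `Δ`. -/

open Function

section PartialSchroederBernstein

variable {I J : Type*} {A : Set I} {B : Set J}

theorem exists_schroederBernstein_set (σ : A → J) (τ : B → I) :
    ∃ S : Set I, ∀ i, i ∈ S ↔ ∀ b, τ b = i → ∃ a : A, ↑a ∈ S ∧ σ a = b := by
  let F : Set I →o Set I :=
    { toFun := fun S => {i | ∀ b, τ b = i → ∃ a : A, ↑a ∈ S ∧ σ a = b}
      monotone' := fun S T hST i hi b hb => (hi b hb).imp fun a ha => ⟨hST ha.1, ha.2⟩ }
  exact ⟨F.lfp, fun i => by rw [← Set.ext_iff.1 F.map_lfp i]; rfl⟩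

theorem exists_bijective_of_partial_injective_of_rel {σ : A → J} {τ : B → I}
    (hσ : Injective σ) (hτ : Injective τ)
    (R : I → J → Prop) (hσR : ∀ a : A, R a (σ a)) (hτR : ∀ b : B, R (τ b) b) :
    ∃ (I₀ : Set I) (J₀ : Set J) (μ : I₀ → J₀),
      Bijective μ ∧ (∀ i : I₀, R i (μ i)) ∧ A ⊆ I₀ ∧ B ⊆ J₀ := by
  obtain ⟨S, hS⟩ := exists_schroederBernstein_set σ τ
  have hback : ∀ i ∉ S, ∃ b, τ b = i ∧ ∀ a : A, ↑a ∈ S → σ a ≠ b := fun i hi => by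
    rw [hS] at hi
    push Not at hi
    exact hi
  choose back hτback hback using hback
  let I₀ : Set I := {i | i ∈ S → i ∈ A}
  let μ : I₀ → J := fun i => if h : ↑i ∈ S then σ ⟨i, i.2 h⟩ else back i h
  have hμ_mem : ∀ (i : I₀) (h : ↑i ∈ S), μ i = σ ⟨i, i.2 h⟩ := fun i h => dif_pos h
  have hμ_not_mem : ∀ (i : I₀) (h : ↑i ∉ S), μ i = back i h := fun i h => dif_neg h
  have hμ : Injective μ := by
    intro i i' h
    by_cases hi : ↑i ∈ S <;> by_cases hi' : ↑i' ∈ S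
    · rw [hμ_mem i hi, hμ_mem i' hi'] at h
      exact Subtype.ext (congrArg Subtype.val (hσ h) :)
    · rw [hμ_mem i hi, hμ_not_mem i' hi'] at h
      exact absurd h (hback _ hi' _ hi)
    · rw [hμ_not_mem i hi, hμ_mem i' hi'] at h
      exact absurd h.symm (hback _ hi _ hi')
    · rw [hμ_not_mem i hi, hμ_not_mem i' hi'] at h
      exact Subtype.ext ((hτback _ hi).symm.trans
        ((congrArg τ (Subtype.ext h)).trans (hτback _ hi')))
  have hμR : ∀ i : I₀, R i (μ i) := fun i => by
    by_cases h : ↑i ∈ S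
    · rw [hμ_mem i h]
      exact hσR ⟨i, i.2 h⟩
    · rw [hμ_not_mem i h]
      simpa only [hτback] using hτR (back i h)
  refine ⟨I₀, Set.range μ, Equiv.ofInjective μ hμ, (Equiv.ofInjective μ hμ).bijective, hμR,
    fun a ha _ => ha, fun b hb => ?_⟩
  by_cases h : τ ⟨b, hb⟩ ∈ S
  · obtain ⟨a, haS, hab⟩ := (hS _).1 h _ rfl
    exact ⟨⟨a, fun _ => a.2⟩, by rw [hμ_mem _ haS, hab]⟩
  · refine ⟨⟨_, fun h' => absurd h' h⟩, ?_⟩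
    rw [hμ_not_mem _ h]
    exact congrArg Subtype.val (hτ (hτback _ h))

end PartialSchroederBernstein

section Bottleneck

variable {X : Type u} {dX : X → X → ℝ≥0∞} {Δ : Set X} {I : Type v} {J : Type w}
  {s : I → X} {t : J → X} {ε : ℝ≥0∞}

theorem IsEmbeddingInto.mono {ε' : ℝ≥0∞} (h : IsEmbeddingInto dX Δ s t ε) (hε : ε ≤ ε') :
    IsEmbeddingInto dX Δ s t ε' := by
  obtain ⟨I', σ, hσ, hdist, hΔ⟩ := h
  exact ⟨I', σ, hσ, fun i => (hdist i).trans hε,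
    fun i hi => (hΔ i hi).imp fun _ hy => ⟨hy.1, hy.2.trans hε⟩⟩

theorem IsMatching.isEmbeddingInto (h : IsMatching dX Δ s t ε) :
    IsEmbeddingInto dX Δ s t ε := by
  obtain ⟨I', J', σ, hσ, hdist, hI, -⟩ := h
  exact ⟨I', fun i => σ i, fun _ _ h => hσ.1 (Subtype.ext h), hdist, hI⟩

theorem IsMatching.symm (hsymm : ∀ x y, dX x y = dX y x) (h : IsMatching dX Δ s t ε) :
    IsMatching dX Δ t s ε := by
  obtain ⟨I', J', σ, hσ, hdist, hI, hJ⟩ := h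
  let e := Equiv.ofBijective σ hσ
  refine ⟨J', I', e.symm, e.symm.bijective, fun j => ?_, hJ, hI⟩
  rw [hsymm, ← congrArg Subtype.val (e.apply_symm_apply j)]
  exact hdist (e.symm j)

theorem IsMatching.of_isEmbeddingInto (hsymm : ∀ x y, dX x y = dX y x)
    (hst : IsEmbeddingInto dX Δ s t ε) (hts : IsEmbeddingInto dX Δ t s ε) :
    IsMatching dX Δ s t ε := by
  obtain ⟨I', σ, hσ, hσdist, hI⟩ := hst
  obtain ⟨J', τ, hτ, hτdist, hJ⟩ := hts
  obtain ⟨I₀, J₀, μ, hμ, hμdist, hI₀, hJ₀⟩ :=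
    exists_bijective_of_partial_injective_of_rel hσ hτ (fun i j => dX (s i) (t j) ≤ ε)
      hσdist fun j => (hsymm _ _).trans_le (hτdist j)
  exact ⟨I₀, J₀, μ, hμ, hμdist, fun i hi => hI i (mt (@hI₀ i) hi),
    fun j hj => hJ j (mt (@hJ₀ j) hj)⟩

theorem bottleneckHemi_le_bottleneckDist :
    bottleneckHemi dX Δ s t ≤ bottleneckDist dX Δ s t :=
  sInf_le_sInf fun _ => IsMatching.isEmbeddingInto

theorem bottleneckDist_comm (hsymm : ∀ x y, dX x y = dX y x) :
    bottleneckDist dX Δ s t = bottleneckDist dX Δ t s :=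
  le_antisymm (sInf_le_sInf fun _ => IsMatching.symm hsymm)
    (sInf_le_sInf fun _ => IsMatching.symm hsymm)

theorem bottleneckDist_le_max_bottleneckHemi (hsymm : ∀ x y, dX x y = dX y x) :
    bottleneckDist dX Δ s t ≤ max (bottleneckHemi dX Δ s t) (bottleneckHemi dX Δ t s) := by
  refine le_of_forall_gt_imp_ge_of_dense fun ε hε => sInf_le ?_
  obtain ⟨ε₁, hst, hε₁⟩ := sInf_lt_iff.1 (max_lt_iff.1 hε).1
  obtain ⟨ε₂, hts, hε₂⟩ := sInf_lt_iff.1 (max_lt_iff.1 hε).2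
  exact IsMatching.of_isEmbeddingInto hsymm (hst.mono hε₁.le) (hts.mono hε₂.le)

end Bottleneck

theorem bottleneckDist_eq_max_hemi_general {X : Type u} (dX : X → X → ℝ≥0∞)
    (hsymm : ∀ x y, dX x y = dX y x) (Δ : Set X)
    {I : Type v} {J : Type w} (s : I → X) (t : J → X) :
    bottleneckDist dX Δ s t = max (bottleneckHemi dX Δ s t) (bottleneckHemi dX Δ t s) :=
  le_antisymm (bottleneckDist_le_max_bottleneckHemi hsymm)
    (max_le bottleneckHemi_le_bottleneckDist
      ((bottleneckDist_comm hsymm).symm ▸ bottleneckHemi_le_bottleneckDist))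

/-- For an extended pseudometric space `(X, dX)`, a subset `Δ ⊆ X`, and multisets
`s : I → X`, `t : J → X`, the bottleneck distance equals the maximum of the two
bottleneck hemidistances. -/
theorem bottleneckDist_eq_max_hemi {X : Type u} (dX : X → X → ℝ≥0∞)
    (hrefl : ∀ x, dX x x = 0) (hsymm : ∀ x y, dX x y = dX y x)
    (htri : ∀ x y z, dX x z ≤ dX x y + dX y z) (Δ : Set X)
    {I : Type v} {J : Type w} (s : I → X) (t : J → X) :
    bottleneckDist dX Δ s t = max (bottleneckHemi dX Δ s t) (bottleneckHemi dX Δ t s) :=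
  bottleneckDist_eq_max_hemi_general dX hsymm Δ s t
end

section
/- Let S and T be sets, let S′ ⊆ S and T′ ⊆ T, and let f : S′ → T and g : T′ → S be injective functions. Then there exist sets S″ and T″ with S′ ⊆ S″ ⊆ S′ ∪ g(T′) and T′ ⊆ T″ ⊆ T, together with a bijection h : S″ → T″, such that for every x ∈ S″ either x ∈ S′ and h(x) = f(x), or h(x) ∈ T′ and g(h(x)) = x. -/
/-! Banach's decomposition: a fixed point `B ⊆ T'` of the monotone map `B ↦ T' \ f (S' \ g B)`
splits `S'' = (S' \ g B) ∪ g B` and `T'' = f (S' \ g B) ∪ B` into disjoint halves, matched by `f`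
on the first and by `g⁻¹` on the second. -/

universe u v

open Function Set

namespace Equiv.Set

variable {α β γ : Type*}

noncomputable def imageEquivImage {p : α → β} {q : α → γ} (hp : Injective p) (hq : Injective q)
    (s : Set α) : p '' s ≃ q '' s :=
  (Equiv.Set.image p s hp).symm.trans (Equiv.Set.image q s hq)

theorem imageEquivImage_apply {p : α → β} {q : α → γ} (hp : Injective p) (hq : Injective q)
    {s : Set α} {x : α} (hx : p x ∈ p '' s) :
    (imageEquivImage hp hq s ⟨p x, hx⟩ : γ) = q x := by
  simp [imageEquivImage]

variable {A A' : Set α} {B B' : Set β} [DecidablePred (· ∈ A)] [DecidablePred (· ∈ B)]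

def unionCongr (hA : Disjoint A A') (hB : Disjoint B B') (e : A ≃ B) (e' : A' ≃ B') :
    (A ∪ A' : Set α) ≃ (B ∪ B' : Set β) :=
  (Equiv.Set.union hA).trans ((e.sumCongr e').trans (Equiv.Set.union hB).symm)

theorem unionCongr_apply_of_mem_left (hA : Disjoint A A') (hB : Disjoint B B') (e : A ≃ B)
    (e' : A' ≃ B') {x : (A ∪ A' : Set α)} (hx : (x : α) ∈ A) :
    (unionCongr hA hB e e' x : β) = e ⟨x, hx⟩ := by
  simp [unionCongr, Equiv.Set.union_apply_left hA hx]

theorem unionCongr_apply_of_mem_right (hA : Disjoint A A') (hB : Disjoint B B') (e : A ≃ B)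
    (e' : A' ≃ B') {x : (A ∪ A' : Set α)} (hx : (x : α) ∈ A') :
    (unionCongr hA hB e e' x : β) = e' ⟨x, hx⟩ := by
  simp [unionCongr, Equiv.Set.union_apply_right hA hx]

end Equiv.Set

theorem Set.image_val_compl_preimage_val {α : Type*} {s : Set α} (t : Set α) :
    ((↑) : s → α) '' ((↑) ⁻¹' t)ᶜ = s \ t := by
  rw [image_val_compl, Subtype.image_preimage_val, sdiff_self_inter]

/-- A refined Schröder–Bernstein theorem: given injections `f : S' → T` and
`g : T' → S` (with `S' ⊆ S`, `T' ⊆ T`), there are intermediate sets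
`S' ⊆ S'' ⊆ S' ∪ g(T')` and `T' ⊆ T'' ⊆ T` and a bijection `h : S'' → T''` such
that each `x ∈ S''` is matched either via `f` (with `x ∈ S'` and `h x = f x`) or
via `g` (with `h x ∈ T'` and `g (h x) = x`). -/
theorem refined_schroeder_bernstein {S : Type u} {T : Type v} (S' : Set S) (T' : Set T)
    (f : S' → T) (g : T' → S) (hf : Function.Injective f) (hg : Function.Injective g) :
    ∃ (S'' : Set S) (T'' : Set T),
      S' ⊆ S'' ∧ S'' ⊆ S' ∪ Set.range g ∧ T' ⊆ T'' ∧ T'' ⊆ Set.univ ∧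
      ∃ h : S'' → T'', Function.Bijective h ∧
        ∀ x : S'',
          (∃ hx : (x : S) ∈ S', (h x : T) = f ⟨x, hx⟩) ∨
          (∃ hy : (h x : T) ∈ T', g ⟨h x, hy⟩ = (x : S)) := by
  classical
  obtain ⟨B, hfix⟩ : ∃ B : Set T', (((↑) ⁻¹' (f '' ((↑) ⁻¹' (g '' B))ᶜ))ᶜ : Set T') = B :=
    ⟨_, OrderHom.map_lfp ⟨_, fun B B' hBB' => compl_subset_compl.2 <| preimage_mono <|
      image_mono <| compl_subset_compl.2 <| preimage_mono <| image_mono hBB'⟩⟩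
  set A : Set S' := ((↑) ⁻¹' (g '' B))ᶜ
  have hA : ((↑) '' A : Set S) = S' \ g '' B := image_val_compl_preimage_val _
  have hB : ((↑) '' B : Set T) = T' \ f '' A := hfix ▸ image_val_compl_preimage_val _
  have hS : Disjoint ((↑) '' A : Set S) (g '' B) := hA ▸ disjoint_sdiff_left
  have hT : Disjoint (f '' A) ((↑) '' B : Set T) := hB ▸ disjoint_sdiff_right
  set h := Equiv.Set.unionCongr hS hT (Equiv.Set.imageEquivImage Subtype.val_injective hf A)
    (Equiv.Set.imageEquivImage hg Subtype.val_injective B)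
  refine ⟨_, _, ?_, ?_, ?_, subset_univ _, h, h.bijective, ?_⟩
  · rw [hA]; exact subset_sdiff_union _ _
  · rw [hA]; exact union_subset_union sdiff_subset (image_subset_range _ _)
  · rw [hB, union_comm]; exact subset_sdiff_union _ _
  · rintro ⟨_, ⟨a, ha, rfl⟩ | ⟨b, hb, rfl⟩⟩
    · have hfa : (h ⟨a, .inl (mem_image_of_mem _ ha)⟩ : T) = f a :=
        (Equiv.Set.unionCongr_apply_of_mem_left hS hT _ _ (mem_image_of_mem _ ha)).trans
          (Equiv.Set.imageEquivImage_apply _ _ _)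
      exact .inl ⟨a.2, hfa⟩
    · have hgb : (h ⟨g b, .inr (mem_image_of_mem g hb)⟩ : T) = b :=
        (Equiv.Set.unionCongr_apply_of_mem_right hS hT _ _ (mem_image_of_mem g hb)).trans
          (Equiv.Set.imageEquivImage_apply _ _ _)
      exact .inr ⟨hgb ▸ b.2, by simp_rw [hgb]⟩
end

section
/- Let κ be a field, let D be an ascending chain complex over κ such that D_n = 0 for all n < 0 and each D_n admits an ℓ_n-orthogonal basis, and let A be an ascending chain complex over κ that is filtered acyclic, meaning that for every n and every x ∈ A_n with ∂_n x = 0 there exists y ∈ A_{n+1} with ∂_{n+1} y = x and ℓ_{n+1}(y) ≤ ℓ_n(x). Then every filtered chain map j : D → A is filtered homotopic to 0; that is, there exist κ-linear maps K_n : D_n → A_{n+1} with ℓ(K_n x) ≤ ℓ(x) for all x ∈ D_n and ∂_{n+1} ∘ K_n + K_{n−1} ∘ ∂_n = j_n for all n. -/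
open scoped Classical

universe u v

/-- Transport along an equality of indices. -/
def castL (κ : Type u) [Field κ] {C : ℤ → Type v} [∀ k, AddCommGroup (C k)]
    [∀ k, Module κ (C k)] {i j : ℤ} (h : i = j) : C i →ₗ[κ] C j := by
  subst h; exact LinearMap.id

/-- The boundary map `∂_{k+1} : C_{k+1} → C_k`, viewed as landing in `C_k`. -/
def bdryMap (κ : Type u) [Field κ] {C : ℤ → Type v} [∀ k, AddCommGroup (C k)]
    [∀ k, Module κ (C k)] (d : ∀ k : ℤ, C k →ₗ[κ] C (k - 1)) (k : ℤ) :
    C (k + 1) →ₗ[κ] C k :=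
  (castL κ (show k + 1 - 1 = k by omega)).comp (d (k + 1))

/-- `(C, d, ℓ)` is an ascending chain complex over `κ`. -/
def IsAscendingComplex (κ : Type u) [Field κ] {C : ℤ → Type v} [∀ k, AddCommGroup (C k)]
    [∀ k, Module κ (C k)] (d : ∀ k : ℤ, C k →ₗ[κ] C (k - 1))
    (ℓ : ∀ k : ℤ, C k → WithBot ℝ) : Prop :=
  (∀ (k : ℤ) (x : C k), d (k - 1) (d k x) = 0) ∧
    (∀ k : ℤ, IsFiltrationFn κ (ℓ k)) ∧
      ∀ (k : ℤ) (x : C k), ℓ (k - 1) (d k x) ≤ ℓ k x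

/-!
The homotopy `K` is built by induction on `n`, starting from `K = 0` below degree `0`.
Given `K_{n-1}`, the map `z = j_n - K_{n-1} ∘ ∂_n` takes values in cycles, because
`∂ z = j ∂ - ∂ K_{n-1} ∂ = j ∂ - (j - K_{n-2} ∂) ∂ = 0`, and `ℓ(z x) ≤ ℓ(x)`.
Filtered acyclicity lifts `z` on each vector of an orthogonal basis of `D_n` without raising
the filtration level, and orthogonality makes the resulting linear map `K_n` filtered.
-/

section Cast

variable (κ : Type*) [Field κ] {C : ℤ → Type*} [∀ k, AddCommGroup (C k)]
  [∀ k, Module κ (C k)]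

lemma map_castL (d : ∀ k : ℤ, C k →ₗ[κ] C (k - 1)) {m n : ℤ} (h : m = n) (y : C m) :
    d n (castL κ h y) = castL κ (congrArg (· - 1) h) (d m y) := by
  subst h; rfl

lemma apply_castL {α : Type*} (F : ∀ k : ℤ, C k → α) {m n : ℤ} (h : m = n) (y : C m) :
    F n (castL κ h y) = F m y := by
  subst h; rfl

end Cast

namespace IsFiltrationFn

variable {κ : Type*} [Field κ] {V : Type*} [AddCommGroup V] [Module κ V]
  {ℓ : V → WithBot ℝ}

lemma apply_zero (hℓ : IsFiltrationFn κ ℓ) : ℓ 0 = ⊥ := (hℓ.1 0).2 rfl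

lemma apply_neg (hℓ : IsFiltrationFn κ ℓ) (v : V) : ℓ (-v) = ℓ v := by
  rw [← neg_one_smul κ v]
  exact hℓ.2.1 (-1) v (neg_ne_zero.2 one_ne_zero)

lemma apply_sub_le (hℓ : IsFiltrationFn κ ℓ) (v w : V) : ℓ (v - w) ≤ max (ℓ v) (ℓ w) := by
  simpa only [sub_eq_add_neg, hℓ.apply_neg] using hℓ.2.2 v (-w)

lemma apply_sum_le (hℓ : IsFiltrationFn κ ℓ) {ι : Type*} (T : Finset ι) (u : ι → V) :
    ℓ (∑ i ∈ T, u i) ≤ T.sup fun i => ℓ (u i) := by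
  induction T using Finset.induction with
  | empty => simp [hℓ.apply_zero]
  | insert a s h ih =>
    rw [Finset.sum_insert h, Finset.sup_insert]
    exact (hℓ.2.2 _ _).trans (max_le_max le_rfl ih)

end IsFiltrationFn

section Orthogonal

variable {κ : Type*} [Field κ] {V W U : Type*} [AddCommGroup V] [Module κ V]
  [AddCommGroup W] [Module κ W] [AddCommGroup U] [Module κ U]
  {ℓV : V → WithBot ℝ} {ℓW : W → WithBot ℝ} {S : Set V}

lemma IsOrthogonal.apply_le_of_mem_span (hS : IsOrthogonal κ ℓV S) (hℓW : IsFiltrationFn κ ℓW)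
    (f : V →ₗ[κ] W) (hf : ∀ v ∈ S, ℓW (f v) ≤ ℓV v) {x : V} (hx : x ∈ Submodule.span κ S) :
    ℓW (f x) ≤ ℓV x := by
  obtain ⟨c, hcS, rfl⟩ := Submodule.mem_span_set.1 hx
  have hlevel : ℓV (c.sum fun v r => r • v) = c.support.sup ℓV := by
    rw [Finsupp.sum, hS.2 c.support hcS c,
      Finset.filter_true_of_mem fun v hv => Finsupp.mem_support_iff.1 hv]
  rw [hlevel, Finsupp.sum, map_sum]
  refine (hℓW.apply_sum_le _ _).trans (Finset.sup_mono_fun fun v hv => ?_)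
  rw [map_smul, hℓW.2.1 _ _ (Finsupp.mem_support_iff.1 hv)]
  exact hf v (hcS hv)

lemma IsOrthogonal.exists_filtered_lift (hS : IsOrthogonal κ ℓV S)
    (hli : LinearIndependent κ (fun v : S => (v : V))) (hspan : Submodule.span κ S = ⊤)
    (hℓW : IsFiltrationFn κ ℓW) (p : W →ₗ[κ] U) (z : V →ₗ[κ] U)
    (hz : ∀ v ∈ S, ∃ w, p w = z v ∧ ℓW w ≤ ℓV v) :
    ∃ f : V →ₗ[κ] W, p ∘ₗ f = z ∧ ∀ x, ℓW (f x) ≤ ℓV x := by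
  choose w hpw hw using fun v : S => hz v v.2
  let b : Module.Basis S κ V := .mk hli (by rw [Subtype.range_coe, hspan])
  have hfb : ∀ v : S, b.constr κ w v = w v := fun v => by
    rw [← Module.Basis.mk_apply hli (by rw [Subtype.range_coe, hspan]) v, b.constr_basis]
  refine ⟨b.constr κ w, LinearMap.ext_on hspan fun v hv => ?_, fun x =>
    hS.apply_le_of_mem_span hℓW _ (fun v hv => ?_) (hspan ▸ Submodule.mem_top)⟩
  · simpa only [LinearMap.comp_apply, hfb ⟨v, hv⟩] using hpw ⟨v, hv⟩
  · simpa only [hfb ⟨v, hv⟩] using hw ⟨v, hv⟩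

end Orthogonal

section Recursion

variable {X : ℤ → Type*}

noncomputable def upwardRec (x : ∀ n, X n) (step : ∀ n, X (n - 1) → X n) (n : ℤ) : X n :=
  if n < 0 then x n else step n (upwardRec x step (n - 1))
termination_by (n + 1).toNat
decreasing_by omega

lemma upwardRec_of_nonneg (x : ∀ n, X n) (step : ∀ n, X (n - 1) → X n) {n : ℤ} (hn : 0 ≤ n) :
    upwardRec x step n = step n (upwardRec x step (n - 1)) := by
  rw [upwardRec, if_neg (not_lt.2 hn)]

lemma exists_forall_rel_of_step [∀ n, Nonempty (X n)] (R : ∀ n, X (n - 1) → X n → Prop)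
    (hneg : ∀ n < 0, ∀ g f, R n g f) (hstep : ∀ n g₂ g, R (n - 1) g₂ g → ∃ f, R n g f) :
    ∃ K : ∀ n, X n, ∀ n, R n (K (n - 1)) (K n) := by
  have hchoice : ∀ n (g : X (n - 1)), ∃ f, (∃ g₂, R (n - 1) g₂ g) → R n g f := by
    intro n g
    by_cases hg : ∃ g₂, R (n - 1) g₂ g
    · obtain ⟨f, hf⟩ := hstep n _ g hg.choose_spec
      exact ⟨f, fun _ => hf⟩
    · exact ⟨Classical.arbitrary _, fun h => absurd h hg⟩
  choose step hstep' using hchoice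
  set K := upwardRec (fun _ => Classical.arbitrary _) step
  have hbelow : ∀ m : ℕ, ∀ n : ℤ, n < m → R n (K (n - 1)) (K n) := by
    intro m
    induction m with
    | zero => exact fun n hn => hneg n hn _ _
    | succ m ih =>
      intro n hn
      rcases lt_or_ge n 0 with hn0 | hn0
      · exact hneg n hn0 _ _
      · rw [show K n = step n (K (n - 1)) from upwardRec_of_nonneg _ _ hn0]
        exact hstep' n _ ⟨_, ih (n - 1) (by omega)⟩
  exact ⟨K, fun n => hbelow (n + 1).toNat n (by omega)⟩

end Recursion

section Homotopy

variable {κ : Type*} [Field κ] {D A : ℤ → Type*}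
  [∀ k, AddCommGroup (D k)] [∀ k, Module κ (D k)]
  [∀ k, AddCommGroup (A k)] [∀ k, Module κ (A k)]
  {dD : ∀ k : ℤ, D k →ₗ[κ] D (k - 1)} {ℓD : ∀ k : ℤ, D k → WithBot ℝ}
  {dA : ∀ k : ℤ, A k →ₗ[κ] A (k - 1)} {ℓA : ∀ k : ℤ, A k → WithBot ℝ}
  {j : ∀ n : ℤ, D n →ₗ[κ] A n}

/-- With `g = K_{n-1}`, the map that `∂_{n+1} ∘ K_n` has to equal. -/
def homotopyDefect (dD : ∀ k : ℤ, D k →ₗ[κ] D (k - 1)) (j : ∀ n : ℤ, D n →ₗ[κ] A n) (n : ℤ)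
    (g : D (n - 1) →ₗ[κ] A (n - 1 + 1)) : D n →ₗ[κ] A n :=
  j n - castL κ (Int.sub_add_cancel n 1) ∘ₗ g ∘ₗ dD n

lemma dA_homotopyDefect_eq_zero (hD : IsAscendingComplex κ dD ℓD)
    (hjchain : ∀ (n : ℤ) (x : D n), dA n (j n x) = j (n - 1) (dD n x)) {n : ℤ}
    {g₂ : D (n - 1 - 1) →ₗ[κ] A (n - 1 - 1 + 1)} {g : D (n - 1) →ₗ[κ] A (n - 1 + 1)}
    (hg : ∀ x, bdryMap κ dA (n - 1) (g x) + castL κ (Int.sub_add_cancel (n - 1) 1)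
      (g₂ (dD (n - 1) x)) = j (n - 1) x) (x : D n) :
    dA n (homotopyDefect dD j n g x) = 0 := by
  have hdg : dA n (castL κ (Int.sub_add_cancel n 1) (g (dD n x)))
      = j (n - 1) (dD n x) := by
    rw [map_castL, ← hg (dD n x), hD.1, map_zero, map_zero, add_zero]
    rfl
  simp only [homotopyDefect, LinearMap.sub_apply, LinearMap.comp_apply, map_sub, hdg,
    hjchain, sub_self]

lemma ℓA_homotopyDefect_le (hD : IsAscendingComplex κ dD ℓD) (hA : IsAscendingComplex κ dA ℓA)
    (hjfilt : ∀ (n : ℤ) (x : D n), ℓA n (j n x) ≤ ℓD n x) {n : ℤ}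
    {g : D (n - 1) →ₗ[κ] A (n - 1 + 1)} (hgfilt : ∀ x, ℓA (n - 1 + 1) (g x) ≤ ℓD (n - 1) x)
    (x : D n) : ℓA n (homotopyDefect dD j n g x) ≤ ℓD n x := by
  refine ((hA.2.1 n).apply_sub_le _ _).trans (max_le (hjfilt n x) ?_)
  rw [LinearMap.comp_apply, LinearMap.comp_apply, apply_castL κ ℓA]
  exact (hgfilt _).trans (hD.2.2 n x)

end Homotopy

/-- Every filtered chain map from a nonnegatively supported ascending chain complex
with orthogonal bases into a filtered acyclic ascending chain complex is filtered
homotopic to `0`. -/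
theorem filtered_chainMap_nullHomotopic (κ : Type u) [Field κ] {D A : ℤ → Type v}
    [∀ k, AddCommGroup (D k)] [∀ k, Module κ (D k)]
    [∀ k, AddCommGroup (A k)] [∀ k, Module κ (A k)]
    (dD : ∀ k : ℤ, D k →ₗ[κ] D (k - 1)) (ℓD : ∀ k : ℤ, D k → WithBot ℝ)
    (dA : ∀ k : ℤ, A k →ₗ[κ] A (k - 1)) (ℓA : ∀ k : ℤ, A k → WithBot ℝ)
    (hD : IsAscendingComplex κ dD ℓD) (hA : IsAscendingComplex κ dA ℓA)
    (hDneg : ∀ n : ℤ, n < 0 → ∀ x : D n, x = 0)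
    (hDbasis : ∀ n : ℤ, ∃ S : Set (D n), IsOrthogonal κ (ℓD n) S ∧
      LinearIndependent κ (fun x : S => (x : D n)) ∧ Submodule.span κ S = ⊤)
    (hAacyclic : ∀ (n : ℤ) (x : A n), dA n x = 0 →
      ∃ y : A (n + 1), bdryMap κ dA n y = x ∧ ℓA (n + 1) y ≤ ℓA n x)
    (j : ∀ n : ℤ, D n →ₗ[κ] A n)
    (hjchain : ∀ (n : ℤ) (x : D n), dA n (j n x) = j (n - 1) (dD n x))
    (hjfilt : ∀ (n : ℤ) (x : D n), ℓA n (j n x) ≤ ℓD n x) :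
    ∃ K : ∀ n : ℤ, D n →ₗ[κ] A (n + 1),
      (∀ (n : ℤ) (x : D n), ℓA (n + 1) (K n x) ≤ ℓD n x) ∧
      ∀ (n : ℤ) (x : D n),
        bdryMap κ dA n (K n x) +
            castL κ (show n - 1 + 1 = n by omega) (K (n - 1) (dD n x)) = j n x := by
  let R : ∀ n : ℤ, (D (n - 1) →ₗ[κ] A (n - 1 + 1)) → (D n →ₗ[κ] A (n + 1)) → Prop :=
    fun n g f => (∀ x, ℓA (n + 1) (f x) ≤ ℓD n x) ∧
      ∀ x, bdryMap κ dA n (f x) + castL κ (Int.sub_add_cancel n 1) (g (dD n x)) = j n x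
  have hneg : ∀ n < 0, ∀ g f, R n g f := fun n hn g f =>
    ⟨fun x => by rw [hDneg n hn x, map_zero, (hA.2.1 _).apply_zero]; exact bot_le,
     fun x => by rw [hDneg n hn x]; simp only [map_zero, add_zero]⟩
  have hstep : ∀ n g₂ g, R (n - 1) g₂ g → ∃ f, R n g f := by
    rintro n g₂ g ⟨hgfilt, hg⟩
    obtain ⟨S, hS, hli, hspan⟩ := hDbasis n
    obtain ⟨f, hpf, hf⟩ := hS.exists_filtered_lift hli hspan (hA.2.1 (n + 1)) (bdryMap κ dA n)
      (homotopyDefect dD j n g) fun v _ =>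
        (hAacyclic n _ (dA_homotopyDefect_eq_zero hD hjchain hg v)).imp fun _ hy =>
          ⟨hy.1, hy.2.trans (ℓA_homotopyDefect_le hD hA hjfilt hgfilt v)⟩
    refine ⟨f, hf, fun x => ?_⟩
    rw [← LinearMap.comp_apply (bdryMap κ dA n) f, hpf]
    exact sub_add_cancel _ _
  obtain ⟨K, hK⟩ := exists_forall_rel_of_step (X := fun n => D n →ₗ[κ] A (n + 1)) R hneg hstep
  exact ⟨K, fun n => (hK n).1, fun n => (hK n).2⟩
end

section
/- Fix Λ > 0 and let M, T, and 𝔇 = S ∪ L ∪ A be as defined. Then T is a bijection of M onto itself, and M is the disjoint union of the sets T^k(𝔇) for k ∈ ℤ; equivalently, for every p ∈ M there is a unique integer k such that T^{−k}(p) ∈ 𝔇 (where T^{−k} denotes the k-th iterate of the inverse of T). -/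
/-- The strip `M = {(x, y) : -2Λ ≤ x + y ≤ 2Λ}`. -/
def Mstrip (Λ : ℝ) : Set (ℝ × ℝ) :=
  {p | -(2 * Λ) ≤ p.1 + p.2 ∧ p.1 + p.2 ≤ 2 * Λ}

/-- The glide reflection `T (x, y) = (-2Λ - y, 2Λ - x)`, as a permutation of the plane. -/
def Tmap (Λ : ℝ) : Equiv.Perm (ℝ × ℝ) where
  toFun p := (-(2 * Λ) - p.2, 2 * Λ - p.1)
  invFun p := (2 * Λ - p.2, -(2 * Λ) - p.1)
  left_inv := by
    rintro ⟨a, b⟩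
    simp only [Prod.mk.injEq]
    constructor <;> ring
  right_inv := by
    rintro ⟨a, b⟩
    simp only [Prod.mk.injEq]
    constructor <;> ring

/-- The half-open square `S = (-Λ, Λ] × [-Λ, Λ)`. -/
def Sset (Λ : ℝ) : Set (ℝ × ℝ) :=
  {p | -Λ < p.1 ∧ p.1 ≤ Λ ∧ -Λ ≤ p.2 ∧ p.2 < Λ}

/-- The region `L = {(x, y) ∈ M : x ≤ -Λ, y < Λ}`. -/
def Lset (Λ : ℝ) : Set (ℝ × ℝ) :=
  {p | p ∈ Mstrip Λ ∧ p.1 ≤ -Λ ∧ p.2 < Λ}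

/-- The region `A = {(x, y) ∈ M : x > -Λ, y ≥ Λ}`. -/
def Aset (Λ : ℝ) : Set (ℝ × ℝ) :=
  {p | p ∈ Mstrip Λ ∧ -Λ < p.1 ∧ Λ ≤ p.2}

/-- The fundamental domain `𝔇 = S ∪ L ∪ A`. -/
def Dfund (Λ : ℝ) : Set (ℝ × ℝ) := Sset Λ ∪ Lset Λ ∪ Aset Λ

/-!
`T` negates `x + y` and lowers `x - y` by `4Λ`, so it preserves `|x + y|`, hence the strip `M`,
and lowers the coordinate `w = x - y + |x + y|` by `4Λ`. On `M`, the domain `𝔇` is exactly the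
slab `-2Λ < w ≤ 2Λ` of width `4Λ`, so `T^{-k} p ∈ 𝔇` says that `w p + 4Λ k` lies in a fixed
half-open interval of length `4Λ`, which happens for exactly one integer `k`.
-/

theorem apply_zpow_apply_eq_sub_zsmul {α G : Type*} [AddCommGroup G] (f : Equiv.Perm α)
    (g : α → G) (c : G) (h : ∀ x, g (f x) = g x - c) (n : ℤ) (x : α) :
    g ((f ^ n) x) = g x - n • c := by
  induction n using Int.induction_on generalizing x with
  | zero => simp
  | succ n ih =>
    rw [zpow_add_one, Equiv.Perm.mul_apply, ih, h, add_zsmul, one_zsmul, sub_add_eq_sub_sub,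
      sub_right_comm]
  | pred n ih =>
    have h_inv : g (f⁻¹ x) = g x + c := by
      have h_x := h (f⁻¹ x)
      rw [Equiv.Perm.coe_inv, Equiv.apply_symm_apply] at h_x
      exact eq_add_of_sub_eq h_x.symm
    rw [zpow_sub_one, Equiv.Perm.mul_apply, ih, h_inv, sub_zsmul, one_zsmul]
    abel

def glideCoord (p : ℝ × ℝ) : ℝ := p.1 - p.2 + |p.1 + p.2|

theorem Tmap_apply (Λ : ℝ) (p : ℝ × ℝ) : Tmap Λ p = (-(2 * Λ) - p.2, 2 * Λ - p.1) := rfl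

theorem abs_fst_add_snd_Tmap (Λ : ℝ) (p : ℝ × ℝ) :
    |(Tmap Λ p).1 + (Tmap Λ p).2| = |p.1 + p.2| := by
  rw [Tmap_apply, ← abs_neg]
  ring_nf

theorem glideCoord_Tmap (Λ : ℝ) (p : ℝ × ℝ) : glideCoord (Tmap Λ p) = glideCoord p - 4 * Λ := by
  rw [glideCoord, abs_fst_add_snd_Tmap, glideCoord, Tmap_apply]
  ring

theorem glideCoord_Tmap_zpow (Λ : ℝ) (n : ℤ) (p : ℝ × ℝ) :
    glideCoord ((Tmap Λ ^ n) p) = glideCoord p - n • (4 * Λ) :=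
  apply_zpow_apply_eq_sub_zsmul _ _ _ (glideCoord_Tmap Λ) n p

theorem mem_Mstrip_iff (Λ : ℝ) (p : ℝ × ℝ) : p ∈ Mstrip Λ ↔ |p.1 + p.2| ≤ 2 * Λ :=
  abs_le.symm

theorem Tmap_mem_Mstrip_iff (Λ : ℝ) (p : ℝ × ℝ) : Tmap Λ p ∈ Mstrip Λ ↔ p ∈ Mstrip Λ := by
  rw [mem_Mstrip_iff, mem_Mstrip_iff, abs_fst_add_snd_Tmap]

theorem abs_fst_add_snd_Tmap_zpow (Λ : ℝ) (n : ℤ) (p : ℝ × ℝ) :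
    |((Tmap Λ ^ n) p).1 + ((Tmap Λ ^ n) p).2| = |p.1 + p.2| := by
  simpa only [zsmul_zero, sub_zero] using apply_zpow_apply_eq_sub_zsmul (Tmap Λ)
    (fun q ↦ |q.1 + q.2|) 0 (fun q ↦ (abs_fst_add_snd_Tmap Λ q).trans (sub_zero _).symm) n p

theorem Tmap_zpow_mem_Mstrip_iff (Λ : ℝ) (n : ℤ) (p : ℝ × ℝ) :
    (Tmap Λ ^ n) p ∈ Mstrip Λ ↔ p ∈ Mstrip Λ := by
  rw [mem_Mstrip_iff, mem_Mstrip_iff, abs_fst_add_snd_Tmap_zpow]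

theorem mem_Dfund_iff {Λ : ℝ} {p : ℝ × ℝ} (hp : p ∈ Mstrip Λ) :
    p ∈ Dfund Λ ↔ glideCoord p ∈ Set.Ioc (-(2 * Λ)) (2 * Λ) := by
  obtain ⟨x, y⟩ := p
  obtain ⟨hm₁, hm₂⟩ := hp
  simp only [Dfund, Sset, Lset, Aset, Mstrip, glideCoord, Set.mem_union, Set.mem_ofPred_eq,
    Set.mem_Ioc] at *
  rcases abs_cases (x + y) with ⟨habs, hs⟩ | ⟨habs, hs⟩ <;> rw [habs] <;> constructor
  · rintro ((⟨_, _, _, _⟩ | ⟨_, _, _⟩) | ⟨_, _, _⟩) <;> constructor <;> linarith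
  · rintro ⟨_, _⟩
    by_cases hy : y < Λ
    · exact Or.inl (Or.inl ⟨by linarith, by linarith, by linarith, hy⟩)
    · exact Or.inr ⟨⟨hm₁, hm₂⟩, by linarith, by linarith⟩
  · rintro ((⟨_, _, _, _⟩ | ⟨_, _, _⟩) | ⟨_, _, _⟩) <;> constructor <;> linarith
  · rintro ⟨_, _⟩
    by_cases hx : x ≤ -Λ
    · exact Or.inl (Or.inr ⟨⟨hm₁, hm₂⟩, hx, by linarith⟩)
    · exact Or.inl (Or.inl ⟨by linarith, by linarith, by linarith, by linarith⟩)

/-- `T` is a bijection of `M` onto itself, and `M` is the disjoint union of the sets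
`T^k(𝔇)` for `k ∈ ℤ`: for every `p ∈ M` there is a unique `k ∈ ℤ` with `T^{-k} p ∈ 𝔇`. -/
theorem Tmap_bijOn_and_unique_fund (Λ : ℝ) (hΛ : 0 < Λ) :
    Set.BijOn (Tmap Λ) (Mstrip Λ) (Mstrip Λ) ∧
      ∀ p ∈ Mstrip Λ, ∃! k : ℤ, (Tmap Λ ^ (-k)) p ∈ Dfund Λ := by
  refine ⟨(Tmap Λ).bijOn (Tmap_mem_Mstrip_iff Λ), fun p hp ↦ ?_⟩
  have h_iff (k : ℤ) : (Tmap Λ ^ (-k)) p ∈ Dfund Λ ↔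
      glideCoord p + k • (4 * Λ) ∈ Set.Ioc (-(2 * Λ)) (-(2 * Λ) + 4 * Λ) := by
    rw [mem_Dfund_iff ((Tmap_zpow_mem_Mstrip_iff Λ (-k) p).mpr hp), glideCoord_Tmap_zpow,
      neg_zsmul, sub_neg_eq_add, show -(2 * Λ) + 4 * Λ = 2 * Λ by ring]
  simpa only [h_iff] using existsUnique_add_zsmul_mem_Ioc (by positivity) (glideCoord p) _
end

section
/- Fix Λ > 0, the strip M with partial order ⪯, the glide-reflection T, the fundamental domain 𝔇 = S ∪ L ∪ A, a strictly increasing bijection φ : ℝ → (−Λ, Λ), the flow (T_M)_ε on M, and the interleaving distance d on M, all as defined. Denote S° = (−Λ,Λ)×(−Λ,Λ), L° = {(x,y) : x + y > −2Λ, x < −Λ, y < Λ}, A° = {(x,y) : x + y < 2Λ, x > −Λ, y > Λ}. Let v ∈ M ∖ ∂M and w ∈ M with d(v, w) < ∞, and suppose v ∈ T^k(R) for some k ∈ ℤ, where R is one of the eight sets S°, L°, A°, (−Λ,Λ)×{−Λ}, (−Λ,Λ)×{Λ}, {−Λ}×(−Λ,Λ), {Λ}×(−Λ,Λ), {(Λ,−Λ)}.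 Then either w ∈ T^k(R), or R is L° or A° and w ∈ ∂M. -/
open scoped ENNReal

noncomputable section

/-- The boundary `∂M = {(x, y) ∈ M : |x + y| = 2Λ}`. -/
def bdryM (Λ : ℝ) : Set (ℝ × ℝ) :=
  {p | p ∈ Mstrip Λ ∧ |p.1 + p.2| = 2 * Λ}

/-- The partial order on `M`: `(x, y) ⪯ (x', y')` iff `x ≥ x'` and `y ≤ y'`. -/
def Mle (p q : ℝ × ℝ) : Prop := q.1 ≤ p.1 ∧ p.2 ≤ q.2

/-- The open square `S° = (-Λ, Λ) × (-Λ, Λ)`. -/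
def SsetInt (Λ : ℝ) : Set (ℝ × ℝ) :=
  {p | -Λ < p.1 ∧ p.1 < Λ ∧ -Λ < p.2 ∧ p.2 < Λ}

/-- The open region `L° = {(x, y) : x + y > -2Λ, x < -Λ, y < Λ}`. -/
def LsetInt (Λ : ℝ) : Set (ℝ × ℝ) :=
  {p | -(2 * Λ) < p.1 + p.2 ∧ p.1 < -Λ ∧ p.2 < Λ}

/-- The open region `A° = {(x, y) : x + y < 2Λ, x > -Λ, y > Λ}`. -/
def AsetInt (Λ : ℝ) : Set (ℝ × ℝ) :=
  {p | p.1 + p.2 < 2 * Λ ∧ -Λ < p.1 ∧ Λ < p.2}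

/-- The `truncated translations` `ρ_s` of `[-Λ, Λ]` determined by a strictly increasing
bijection `φ : ℝ → (-Λ, Λ)`: `ρ_s t = φ (s + φ⁻¹ t)` for `t ∈ (-Λ, Λ)`, and
`ρ_s (±Λ) = ±Λ`. -/
def rhoFlow (Λ : ℝ) (φ : ℝ → ℝ) (s t : ℝ) : ℝ :=
  if t ≤ -Λ then -Λ else if Λ ≤ t then Λ else φ (s + Function.invFun φ t)

/-- The interleaving distance on `M` associated to a flow:
`d (v, w) = inf {ε > 0 : v ⪯ flow ε w and w ⪯ flow ε v}` (with `inf ∅ = ∞`). -/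
def dInt (flow : ℝ → ℝ × ℝ → ℝ × ℝ) (v w : ℝ × ℝ) : ℝ≥0∞ :=
  sInf {e : ℝ≥0∞ | ∃ ε : ℝ, 0 < ε ∧ e = ENNReal.ofReal ε ∧
    Mle v (flow ε w) ∧ Mle w (flow ε v)}

/-! The flow never moves a point of the fundamental domain `𝔇` across one of the lines
`x = ±Λ`, `y = ±Λ`, and it preserves the translate `T^k(𝔇)` containing the point. Since `T`
maps `𝔇` into the quadrant `{x ≤ -Λ, y ≥ Λ}`, no point of `𝔇` lies below a point of `T^j(𝔇)`
for `j ≥ 1`, so two interleaved points lie in the same translate `T^k(𝔇)`. Within it, the two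
inequalities `v ⪯ flow ε w` and `w ⪯ flow ε v` squeeze the position of each coordinate relative
to `±Λ`, so `v` and `w` lie in the same cell of the grid cut out by these four lines. The regions
`R` are exactly these cells, except that the cells of `L°` and `A°` also contain a piece of `∂M`. -/

/-- `t` and `t'` lie in the same cell of the partition of `α` cut out by the points of `C`. -/
def SameCell {α : Type*} [Preorder α] (C : Set α) (t t' : α) : Prop :=
  ∀ c ∈ C, (t < c ↔ t' < c) ∧ (t ≤ c ↔ t' ≤ c)

namespace SameCell

variable {α : Type*} [LinearOrder α] {C : Set α} {c t t' : α}

theorem lt_iff (h : SameCell C t t') (hc : c ∈ C) : t < c ↔ t' < c := (h c hc).1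

theorem le_iff (h : SameCell C t t') (hc : c ∈ C) : t ≤ c ↔ t' ≤ c := (h c hc).2

theorem gt_iff (h : SameCell C t t') (hc : c ∈ C) : c < t ↔ c < t' := by
  simpa only [not_le] using (h.le_iff hc).not

theorem ge_iff (h : SameCell C t t') (hc : c ∈ C) : c ≤ t ↔ c ≤ t' := by
  simpa only [not_lt] using (h.lt_iff hc).not

theorem of_le_of_le {a a' b b' : α} (ha : SameCell C a a') (hb : SameCell C b b')
    (hab : b' ≤ a) (hba : a' ≤ b) : SameCell C a b := fun c hc => by
  have := ha c hc; have := hb c hc; grind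

theorem of_ge_of_ge {a a' b b' : α} (ha : SameCell C a a') (hb : SameCell C b b')
    (hab : a ≤ b') (hba : b ≤ a') : SameCell C a b := fun c hc => by
  have := ha c hc; have := hb c hc; grind

theorem of_eq_or_mem_Ioo {l u : α} (hC : ∀ c ∈ C, c ∉ Set.Ioo l u)
    (h : t' = t ∨ (t ∈ Set.Ioo l u ∧ t' ∈ Set.Ioo l u)) : SameCell C t t' := fun c hc => by
  have := hC c hc; simp only [Set.mem_Ioo] at *; grind

end SameCell

def SameBox (Λ : ℝ) (p q : ℝ × ℝ) : Prop :=
  SameCell {-Λ, Λ} p.1 q.1 ∧ SameCell {-Λ, Λ} p.2 q.2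

theorem SameBox.of_interleaved {Λ : ℝ} {p p' q q' : ℝ × ℝ} (hp : SameBox Λ p p')
    (hq : SameBox Λ q q') (h₁ : Mle p q') (h₂ : Mle q p') : SameBox Λ p q :=
  ⟨hp.1.of_le_of_le hq.1 h₁.1 h₂.1, hp.2.of_ge_of_ge hq.2 h₁.2 h₂.2⟩

section rhoFlow

variable {Λ : ℝ} {φ : ℝ → ℝ}

theorem rhoFlow_neg_self (s : ℝ) : rhoFlow Λ φ s (-Λ) = -Λ := if_pos le_rfl

theorem rhoFlow_self (hΛ : 0 < Λ) (s : ℝ) : rhoFlow Λ φ s Λ = Λ := by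
  rw [rhoFlow, if_neg (by linarith), if_pos le_rfl]

theorem rhoFlow_of_mem_Ioo (s : ℝ) {t : ℝ} (ht : t ∈ Set.Ioo (-Λ) Λ) :
    rhoFlow Λ φ s t = φ (s + Function.invFun φ t) := by
  rw [rhoFlow, if_neg (not_le.2 ht.1), if_neg (not_le.2 ht.2)]

theorem rhoFlow_eq_or_mem_Ioo (hφ : Set.range φ = Set.Ioo (-Λ) Λ) (s : ℝ) {t : ℝ}
    (ht : t ∈ Set.Icc (-Λ) Λ) :
    rhoFlow Λ φ s t = t ∨ (t ∈ Set.Ioo (-Λ) Λ ∧ rhoFlow Λ φ s t ∈ Set.Ioo (-Λ) Λ) := by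
  unfold rhoFlow
  split_ifs with h₁ h₂
  · left; linarith [ht.1]
  · left; linarith [ht.2]
  · exact Or.inr ⟨⟨not_le.1 h₁, not_le.1 h₂⟩, hφ ▸ Set.mem_range_self _⟩

theorem rhoFlow_mem_Icc (hφ : Set.range φ = Set.Ioo (-Λ) Λ) (s : ℝ) {t : ℝ}
    (ht : t ∈ Set.Icc (-Λ) Λ) : rhoFlow Λ φ s t ∈ Set.Icc (-Λ) Λ := by
  rcases rhoFlow_eq_or_mem_Ioo hφ s ht with h | ⟨-, h⟩
  · rwa [h]
  · exact Set.Ioo_subset_Icc_self h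

theorem monotoneOn_rhoFlow (hΛ : 0 < Λ) (hφmono : StrictMono φ)
    (hφ : Set.range φ = Set.Ioo (-Λ) Λ) (s : ℝ) :
    MonotoneOn (rhoFlow Λ φ s) (Set.Icc (-Λ) Λ) := by
  intro t ht t' ht' htt'
  rcases eq_or_lt_of_le ht.1 with rfl | ht₁
  · rw [rhoFlow_neg_self]
    exact (rhoFlow_mem_Icc hφ s ht').1
  rcases eq_or_lt_of_le ht'.2 with rfl | ht₂
  · rw [rhoFlow_self hΛ]
    exact (rhoFlow_mem_Icc hφ s ht).2
  have hinv {u : ℝ} (hu : u ∈ Set.Ioo (-Λ) Λ) : φ (Function.invFun φ u) = u :=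
    Function.invFun_eq (show u ∈ Set.range φ from hφ ▸ hu)
  have hI : t ∈ Set.Ioo (-Λ) Λ := ⟨ht₁, htt'.trans_lt ht₂⟩
  have hI' : t' ∈ Set.Ioo (-Λ) Λ := ⟨ht₁.trans_le htt', ht₂⟩
  have hg : Function.invFun φ t ≤ Function.invFun φ t' := by
    rwa [← hφmono.le_iff_le, hinv hI, hinv hI']
  rw [rhoFlow_of_mem_Ioo s hI, rhoFlow_of_mem_Ioo s hI']
  exact hφmono.monotone (by linarith)

theorem sameCell_rhoFlow (hφ : Set.range φ = Set.Ioo (-Λ) Λ) (s : ℝ) {t : ℝ}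
    (ht : t ∈ Set.Icc (-Λ) Λ) : SameCell {-Λ, Λ} t (rhoFlow Λ φ s t) :=
  SameCell.of_eq_or_mem_Ioo (by simp) (rhoFlow_eq_or_mem_Ioo hφ s ht)

/-- The coordinate maps of the flow on `L` and `A`, with `c = ∓2Λ`. -/
theorem sameCell_sub_rhoFlow_sub (hφ : Set.range φ = Set.Ioo (-Λ) Λ) (s : ℝ) {c t : ℝ}
    (hc : 2 * Λ ≤ |c|) (ht : c - t ∈ Set.Icc (-Λ) Λ) :
    SameCell {-Λ, Λ} t (c - rhoFlow Λ φ s (c - t)) := by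
  have hc' := le_abs'.1 hc
  refine SameCell.of_eq_or_mem_Ioo (l := c - Λ) (u := c + Λ) ?_ ?_
  · rintro d hd ⟨h₁, h₂⟩
    rcases hd with rfl | rfl <;> rcases hc' with hc' | hc' <;> linarith
  · rcases rhoFlow_eq_or_mem_Ioo hφ s ht with h | ⟨⟨h₁, h₂⟩, h₃, h₄⟩
    · left; linarith
    · right; exact ⟨⟨by linarith, by linarith⟩, by linarith, by linarith⟩

end rhoFlow

theorem rel_zpow_apply_iff {α : Type*} {r : α → α → Prop} {σ : Equiv.Perm α}
    (h : ∀ p q, r (σ p) (σ q) ↔ r p q) (k : ℤ) (p q : α) :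
    r ((σ ^ k) p) ((σ ^ k) q) ↔ r p q := by
  induction k using Int.induction_on generalizing p q with
  | zero => rfl
  | succ n ih => rw [zpow_add_one, Equiv.Perm.mul_apply, Equiv.Perm.mul_apply, ih, h]
  | pred n ih =>
    rw [zpow_sub_one, Equiv.Perm.mul_apply, Equiv.Perm.mul_apply, ih, ← h, Equiv.Perm.coe_inv,
      Equiv.apply_symm_apply, Equiv.apply_symm_apply]

theorem apply_zpow_apply_of_apply_eq_add {α G : Type*} [AddCommGroup G] {f : α → G}
    {σ : Equiv.Perm α} {c : G} (h : ∀ p, f (σ p) = f p + c) (k : ℤ) (p : α) :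
    f ((σ ^ k) p) = f p + k • c := by
  induction k using Int.induction_on generalizing p with
  | zero => simp
  | succ n ih =>
    rw [zpow_add_one, Equiv.Perm.mul_apply, ih, h, add_zsmul, one_zsmul]
    abel
  | pred n ih =>
    have hinv := h (σ⁻¹ p)
    rw [Equiv.Perm.coe_inv, Equiv.apply_symm_apply] at hinv
    rw [zpow_sub_one, Equiv.Perm.mul_apply, ih, sub_zsmul, one_zsmul, Equiv.Perm.coe_inv,
      eq_sub_of_add_eq hinv.symm]
    abel

section Tmap

variable {Λ : ℝ}

theorem mle_tmap_zpow_iff (k : ℤ) (p q : ℝ × ℝ) :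
    Mle ((Tmap Λ ^ k) p) ((Tmap Λ ^ k) q) ↔ Mle p q :=
  rel_zpow_apply_iff (fun p q => by
    simp only [Mle, Tmap, Equiv.coe_fn_mk, sub_le_sub_iff_left]; exact and_comm) k p q

theorem abs_add_tmap_zpow (k : ℤ) (p : ℝ × ℝ) :
    |((Tmap Λ ^ k) p).1 + ((Tmap Λ ^ k) p).2| = |p.1 + p.2| := by
  simpa using apply_zpow_apply_of_apply_eq_add (f := fun p : ℝ × ℝ => |p.1 + p.2|)
    (σ := Tmap Λ) (c := 0) (fun p => by
      simp only [Tmap, Equiv.coe_fn_mk, add_zero]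
      rw [← abs_neg]; ring_nf) k p

theorem sub_tmap_zpow (k : ℤ) (p : ℝ × ℝ) :
    ((Tmap Λ ^ k) p).2 - ((Tmap Λ ^ k) p).1 = p.2 - p.1 + k • (4 * Λ) :=
  apply_zpow_apply_of_apply_eq_add (f := fun p : ℝ × ℝ => p.2 - p.1)
    (fun p => by simp only [Tmap, Equiv.coe_fn_mk]; ring) k p

theorem mapsTo_tmap :
    Set.MapsTo (Tmap Λ) (Set.Iic Λ ×ˢ Set.Ici (-Λ)) (Set.Iic (-Λ) ×ˢ Set.Ici Λ) :=
  fun p ⟨h₁, h₂⟩ => ⟨show -(2 * Λ) - p.2 ≤ -Λ by linarith [h₂.out],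
    show Λ ≤ 2 * Λ - p.1 by linarith [h₁.out]⟩

theorem mapsTo_tmap_zpow (hΛ : 0 < Λ) {j : ℤ} (hj : 0 < j) :
    Set.MapsTo (Tmap Λ ^ j) (Set.Iic Λ ×ˢ Set.Ici (-Λ)) (Set.Iic (-Λ) ×ˢ Set.Ici Λ) := by
  lift j to ℕ using hj.le
  obtain ⟨n, rfl⟩ : ∃ n, j = n + 1 := ⟨j - 1, by omega⟩
  have hsub : Set.Iic (-Λ) ×ˢ Set.Ici Λ ⊆ Set.Iic Λ ×ˢ Set.Ici (-Λ) :=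
    Set.prod_mono (Set.Iic_subset_Iic.2 (by linarith)) (Set.Ici_subset_Ici.2 (by linarith))
  rw [zpow_natCast, Equiv.Perm.coe_pow, Function.iterate_succ']
  exact mapsTo_tmap.comp ((mapsTo_tmap.mono_right hsub).iterate n)

end Tmap

def FundDomain (Λ : ℝ) : Set (ℝ × ℝ) := Sset Λ ∪ Lset Λ ∪ Aset Λ

namespace FundDomain

variable {Λ : ℝ}

theorem subset_Iic_prod_Ici : FundDomain Λ ⊆ Set.Iic Λ ×ˢ Set.Ici (-Λ) := by
  rintro p ((⟨-, h₁, h₂, -⟩ | ⟨⟨h₁, -⟩, h₂, h₃⟩) | ⟨⟨-, h₁⟩, h₂, h₃⟩)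
  · exact ⟨h₁, h₂⟩
  · exact ⟨show p.1 ≤ Λ by linarith, show -Λ ≤ p.2 by linarith⟩
  · exact ⟨show p.1 ≤ Λ by linarith, show -Λ ≤ p.2 by linarith⟩

theorem mem_of_sub_mem_Ico {p : ℝ × ℝ} (hp : p ∈ Mstrip Λ)
    (ht : p.2 - p.1 ∈ Set.Ico (|p.1 + p.2| - 2 * Λ) (|p.1 + p.2| - 2 * Λ + 4 * Λ)) :
    p ∈ FundDomain Λ := by
  obtain ⟨hu₁, hu₂⟩ := hp
  obtain ⟨ht₁, ht₂⟩ := ht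
  rcases le_or_gt 0 (p.1 + p.2) with hu | hu
  · rw [abs_of_nonneg hu] at ht₁ ht₂
    by_cases hy : p.2 < Λ
    · exact Or.inl (Or.inl ⟨by linarith, by linarith, by linarith, hy⟩)
    · exact Or.inr ⟨⟨hu₁, hu₂⟩, by linarith, by linarith⟩
  · rw [abs_of_neg hu] at ht₁ ht₂
    by_cases hx : -Λ < p.1
    · exact Or.inl (Or.inl ⟨hx, by linarith, by linarith, by linarith⟩)
    · exact Or.inl (Or.inr ⟨⟨hu₁, hu₂⟩, by linarith, by linarith⟩)

/-- `T` preserves `|x + y|` and shifts `y - x` by `4Λ`, while each line `x + y = u` meets `𝔇` in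
the window `|u| - 2Λ ≤ y - x < |u| + 2Λ` of length `4Λ`. -/
theorem exists_tmap_zpow_eq (hΛ : 0 < Λ) {w : ℝ × ℝ} (hw : w ∈ Mstrip Λ) :
    ∃ m : ℤ, ∃ q ∈ FundDomain Λ, (Tmap Λ ^ m) q = w := by
  obtain ⟨m, hm, -⟩ := existsUnique_sub_zsmul_mem_Ico (by positivity : 0 < 4 * Λ)
    (w.2 - w.1) (|w.1 + w.2| - 2 * Λ)
  refine ⟨m, (Tmap Λ ^ (-m)) w, mem_of_sub_mem_Ico ?_ ?_, ?_⟩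
  · exact abs_le.1 ((abs_add_tmap_zpow (-m) w).trans_le (abs_le.2 hw))
  · rwa [abs_add_tmap_zpow, sub_tmap_zpow, neg_zsmul, ← sub_eq_add_neg]
  · rw [← Equiv.Perm.mul_apply, ← zpow_add, add_neg_cancel, zpow_zero, Equiv.Perm.one_apply]

theorem le_of_mle_tmap_zpow (hΛ : 0 < Λ) {a b : ℝ × ℝ} (ha : a ∈ FundDomain Λ)
    (hb : b ∈ FundDomain Λ) {k m : ℤ} (h : Mle ((Tmap Λ ^ k) a) ((Tmap Λ ^ m) b)) : k ≤ m := by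
  by_contra! hmk
  rw [show k = m + (k - m) by ring, zpow_add, Equiv.Perm.mul_apply, mle_tmap_zpow_iff] at h
  obtain ⟨hx, hy⟩ := mapsTo_tmap_zpow hΛ (sub_pos.2 hmk) (subset_Iic_prod_Ici ha)
  obtain ⟨h₁, h₂⟩ := h
  rcases hb with (⟨hb, -⟩ | ⟨-, -, hb⟩) | ⟨-, hb, -⟩
  · exact (h₁.trans hx.out).not_gt hb
  · exact (hy.out.trans h₂).not_gt hb
  · exact (h₁.trans hx.out).not_gt hb

end FundDomain

section localFlow

variable {Λ : ℝ} {φ : ℝ → ℝ} {ε : ℝ} {q : ℝ × ℝ}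

theorem flow_sset_mem (hφ : Set.range φ = Set.Ioo (-Λ) Λ) (hq : q ∈ Sset Λ) :
    (rhoFlow Λ φ (-ε) q.1, rhoFlow Λ φ ε q.2) ∈ Sset Λ ∧
      SameBox Λ q (rhoFlow Λ φ (-ε) q.1, rhoFlow Λ φ ε q.2) := by
  obtain ⟨hx₁, hx₂, hy₁, hy₂⟩ := hq
  have hx := sameCell_rhoFlow hφ (-ε) (t := q.1) ⟨hx₁.le, hx₂⟩
  have hy := sameCell_rhoFlow hφ ε (t := q.2) ⟨hy₁, hy₂.le⟩
  exact ⟨⟨(hx.gt_iff (by simp)).1 hx₁, (hx.le_iff (by simp)).1 hx₂,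
    (hy.ge_iff (by simp)).1 hy₁, (hy.lt_iff (by simp)).1 hy₂⟩, hx, hy⟩

theorem flow_lset_mem (hΛ : 0 < Λ) (hφmono : StrictMono φ)
    (hφ : Set.range φ = Set.Ioo (-Λ) Λ) (hq : q ∈ Lset Λ) :
    (-(2 * Λ) - rhoFlow Λ φ ε (-(2 * Λ) - q.1), rhoFlow Λ φ ε q.2) ∈ Lset Λ ∧
      SameBox Λ q (-(2 * Λ) - rhoFlow Λ φ ε (-(2 * Λ) - q.1), rhoFlow Λ φ ε q.2) := by
  obtain ⟨⟨hs, -⟩, hx, hy⟩ := hq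
  have hs' : -(2 * Λ) - q.1 ∈ Set.Icc (-Λ) Λ := ⟨by linarith, by linarith⟩
  have hy' : q.2 ∈ Set.Icc (-Λ) Λ := ⟨by linarith, hy.le⟩
  have hcx := sameCell_sub_rhoFlow_sub hφ ε (by rw [abs_neg, abs_of_pos (by linarith)]) hs'
  have hcy := sameCell_rhoFlow hφ ε hy'
  have hmono := monotoneOn_rhoFlow hΛ hφmono hφ ε hs' hy' (by linarith)
  have hx₂ := (hcx.le_iff (by simp)).1 hx
  have hy₂ := (hcy.lt_iff (by simp)).1 hy
  exact ⟨⟨⟨by linarith, by linarith⟩, hx₂, hy₂⟩, hcx, hcy⟩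

theorem flow_aset_mem (hΛ : 0 < Λ) (hφmono : StrictMono φ)
    (hφ : Set.range φ = Set.Ioo (-Λ) Λ) (hq : q ∈ Aset Λ) :
    (rhoFlow Λ φ (-ε) q.1, 2 * Λ - rhoFlow Λ φ (-ε) (2 * Λ - q.2)) ∈ Aset Λ ∧
      SameBox Λ q (rhoFlow Λ φ (-ε) q.1, 2 * Λ - rhoFlow Λ φ (-ε) (2 * Λ - q.2)) := by
  obtain ⟨⟨-, hs⟩, hx, hy⟩ := hq
  have hx' : q.1 ∈ Set.Icc (-Λ) Λ := ⟨hx.le, by linarith⟩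
  have hs' : 2 * Λ - q.2 ∈ Set.Icc (-Λ) Λ := ⟨by linarith, by linarith⟩
  have hcx := sameCell_rhoFlow hφ (-ε) hx'
  have hcy := sameCell_sub_rhoFlow_sub hφ (-ε) (by rw [abs_of_pos (by linarith)]) hs'
  have hmono := monotoneOn_rhoFlow hΛ hφmono hφ (-ε) hx' hs' (by linarith)
  have hx₂ := (hcx.gt_iff (by simp)).1 hx
  have hy₂ := (hcy.ge_iff (by simp)).1 hy
  exact ⟨⟨⟨by linarith, by linarith⟩, hx₂, hy₂⟩, hcx, hcy⟩

end localFlow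

section interleaving

variable {Λ : ℝ} {φ : ℝ → ℝ} {flow : ℝ → ℝ × ℝ → ℝ × ℝ}

theorem exists_flow_tmap_zpow_eq (hΛ : 0 < Λ) (hφmono : StrictMono φ)
    (hφ : Set.range φ = Set.Ioo (-Λ) Λ)
    (hflowS : ∀ ε : ℝ, 0 ≤ ε → ∀ k : ℤ, ∀ p ∈ Sset Λ,
      flow ε ((Tmap Λ ^ k) p) =
        (Tmap Λ ^ k) (rhoFlow Λ φ (-ε) p.1, rhoFlow Λ φ ε p.2))
    (hflowL : ∀ ε : ℝ, 0 ≤ ε → ∀ k : ℤ, ∀ p ∈ Lset Λ,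
      flow ε ((Tmap Λ ^ k) p) =
        (Tmap Λ ^ k) (-(2 * Λ) - rhoFlow Λ φ ε (-(2 * Λ) - p.1), rhoFlow Λ φ ε p.2))
    (hflowA : ∀ ε : ℝ, 0 ≤ ε → ∀ k : ℤ, ∀ p ∈ Aset Λ,
      flow ε ((Tmap Λ ^ k) p) =
        (Tmap Λ ^ k) (rhoFlow Λ φ (-ε) p.1, 2 * Λ - rhoFlow Λ φ (-ε) (2 * Λ - p.2)))
    {ε : ℝ} (hε : 0 ≤ ε) (k : ℤ) {p : ℝ × ℝ} (hp : p ∈ FundDomain Λ) :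
    ∃ p' ∈ FundDomain Λ, flow ε ((Tmap Λ ^ k) p) = (Tmap Λ ^ k) p' ∧ SameBox Λ p p' := by
  rcases hp with (hp | hp) | hp
  · obtain ⟨hp', hpp'⟩ := flow_sset_mem (ε := ε) hφ hp
    exact ⟨_, Or.inl (Or.inl hp'), hflowS ε hε k p hp, hpp'⟩
  · obtain ⟨hp', hpp'⟩ := flow_lset_mem (ε := ε) hΛ hφmono hφ hp
    exact ⟨_, Or.inl (Or.inr hp'), hflowL ε hε k p hp, hpp'⟩
  · obtain ⟨hp', hpp'⟩ := flow_aset_mem (ε := ε) hΛ hφmono hφ hp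
    exact ⟨_, Or.inr hp', hflowA ε hε k p hp, hpp'⟩

theorem exists_mle_of_dInt_ne_top {v w : ℝ × ℝ} (h : dInt flow v w ≠ ⊤) :
    ∃ ε > 0, Mle v (flow ε w) ∧ Mle w (flow ε v) := by
  contrapose! h
  refine (congrArg sInf (Set.eq_empty_of_forall_notMem ?_)).trans sInf_empty
  rintro e ⟨ε, hε, -, h₁, h₂⟩
  exact h ε hε h₁ h₂

end interleaving

theorem eq_and_sameBox_of_mle_tmap_zpow {Λ : ℝ} (hΛ : 0 < Λ) {p p' q q' : ℝ × ℝ}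
    (hp : p ∈ FundDomain Λ) (hp' : p' ∈ FundDomain Λ) (hq : q ∈ FundDomain Λ)
    (hq' : q' ∈ FundDomain Λ) (hpp' : SameBox Λ p p') (hqq' : SameBox Λ q q') {k m : ℤ}
    (h₁ : Mle ((Tmap Λ ^ k) p) ((Tmap Λ ^ m) q')) (h₂ : Mle ((Tmap Λ ^ m) q) ((Tmap Λ ^ k) p')) :
    k = m ∧ SameBox Λ p q := by
  obtain rfl : k = m := le_antisymm (FundDomain.le_of_mle_tmap_zpow hΛ hp hq' h₁)
    (FundDomain.le_of_mle_tmap_zpow hΛ hq hp' h₂)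
  rw [mle_tmap_zpow_iff] at h₁ h₂
  exact ⟨rfl, hpp'.of_interleaved hqq' h₁ h₂⟩

def IsRegion (Λ : ℝ) (R : Set (ℝ × ℝ)) : Prop :=
  R = SsetInt Λ ∨ R = LsetInt Λ ∨ R = AsetInt Λ ∨
    R = Set.Ioo (-Λ) Λ ×ˢ ({-Λ} : Set ℝ) ∨ R = Set.Ioo (-Λ) Λ ×ˢ ({Λ} : Set ℝ) ∨
    R = ({-Λ} : Set ℝ) ×ˢ Set.Ioo (-Λ) Λ ∨ R = ({Λ} : Set ℝ) ×ˢ Set.Ioo (-Λ) Λ ∨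
    R = ({(Λ, -Λ)} : Set (ℝ × ℝ))

namespace IsRegion

variable {Λ : ℝ} {R : Set (ℝ × ℝ)}

theorem subset_fundDomain (hΛ : 0 < Λ) (hR : IsRegion Λ R) : R ⊆ FundDomain Λ := by
  rintro ⟨x, y⟩ hp
  simp only [FundDomain, Sset, Lset, Aset, Mstrip, Set.mem_union, Set.mem_ofPred_eq]
  rcases hR with rfl | rfl | rfl | rfl | rfl | rfl | rfl | rfl <;>
  simp only [SsetInt, LsetInt, AsetInt, Set.mem_ofPred_eq, Set.mem_prod, Set.mem_Ioo,
      Set.mem_singleton_iff, Prod.mk.injEq] at hp <;> grind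

theorem mem_or_of_sameBox (hR : IsRegion Λ R) {p q : ℝ × ℝ} (hp : p ∈ R)
    (hq : q ∈ FundDomain Λ) (h : SameBox Λ p q) :
    q ∈ R ∨ ((R = LsetInt Λ ∨ R = AsetInt Λ) ∧ |q.1 + q.2| = 2 * Λ) := by
  have hx₁ := h.1 (-Λ) (by simp)
  have hx₂ := h.1 Λ (by simp)
  have hy₁ := h.2 (-Λ) (by simp)
  have hy₂ := h.2 Λ (by simp)
  obtain ⟨x, y⟩ := p
  obtain ⟨a, b⟩ := q
  simp only [FundDomain, Sset, Lset, Aset, Mstrip, Set.mem_union, Set.mem_ofPred_eq] at hq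
  rcases hR with rfl | rfl | rfl | rfl | rfl | rfl | rfl | rfl <;>
  simp only [SsetInt, LsetInt, AsetInt, Set.mem_ofPred_eq, Set.mem_prod, Set.mem_Ioo,
      Set.mem_singleton_iff, Prod.mk.injEq] at hp ⊢ <;> grind

end IsRegion

theorem regions_separated_general (Λ : ℝ) (hΛ : 0 < Λ) (φ : ℝ → ℝ) (hφmono : StrictMono φ)
    (hφrange : Set.range φ = Set.Ioo (-Λ) Λ)
    (flow : ℝ → ℝ × ℝ → ℝ × ℝ)
    (hflowS : ∀ ε : ℝ, 0 ≤ ε → ∀ k : ℤ, ∀ p ∈ Sset Λ,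
      flow ε ((Tmap Λ ^ k) p) =
        (Tmap Λ ^ k) (rhoFlow Λ φ (-ε) p.1, rhoFlow Λ φ ε p.2))
    (hflowL : ∀ ε : ℝ, 0 ≤ ε → ∀ k : ℤ, ∀ p ∈ Lset Λ,
      flow ε ((Tmap Λ ^ k) p) =
        (Tmap Λ ^ k) (-(2 * Λ) - rhoFlow Λ φ ε (-(2 * Λ) - p.1), rhoFlow Λ φ ε p.2))
    (hflowA : ∀ ε : ℝ, 0 ≤ ε → ∀ k : ℤ, ∀ p ∈ Aset Λ,
      flow ε ((Tmap Λ ^ k) p) =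
        (Tmap Λ ^ k) (rhoFlow Λ φ (-ε) p.1, 2 * Λ - rhoFlow Λ φ (-ε) (2 * Λ - p.2)))
    (v w : ℝ × ℝ) (hw : w ∈ Mstrip Λ)
    (hd : dInt flow v w ≠ ⊤) (k : ℤ) (R : Set (ℝ × ℝ))
    (hR : R = SsetInt Λ ∨ R = LsetInt Λ ∨ R = AsetInt Λ ∨
      R = Set.Ioo (-Λ) Λ ×ˢ ({-Λ} : Set ℝ) ∨ R = Set.Ioo (-Λ) Λ ×ˢ ({Λ} : Set ℝ) ∨
      R = ({-Λ} : Set ℝ) ×ˢ Set.Ioo (-Λ) Λ ∨ R = ({Λ} : Set ℝ) ×ˢ Set.Ioo (-Λ) Λ ∨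
      R = ({(Λ, -Λ)} : Set (ℝ × ℝ)))
    (hvR : v ∈ (Tmap Λ ^ k) '' R) :
    w ∈ (Tmap Λ ^ k) '' R ∨ ((R = LsetInt Λ ∨ R = AsetInt Λ) ∧ w ∈ bdryM Λ) := by
  have hR : IsRegion Λ R := hR
  obtain ⟨ε, hε, hvw, hwv⟩ := exists_mle_of_dInt_ne_top hd
  obtain ⟨p, hpR, rfl⟩ := hvR
  obtain ⟨m, q, hq, rfl⟩ := FundDomain.exists_tmap_zpow_eq hΛ hw
  have hp := hR.subset_fundDomain hΛ hpR
  obtain ⟨p', hp', hfp, hpp'⟩ :=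
    exists_flow_tmap_zpow_eq hΛ hφmono hφrange hflowS hflowL hflowA hε.le k hp
  obtain ⟨q', hq', hfq, hqq'⟩ :=
    exists_flow_tmap_zpow_eq hΛ hφmono hφrange hflowS hflowL hflowA hε.le m hq
  rw [hfq] at hvw
  rw [hfp] at hwv
  obtain ⟨rfl, hpq⟩ := eq_and_sameBox_of_mle_tmap_zpow hΛ hp hp' hq hq' hpp' hqq' hvw hwv
  rcases hR.mem_or_of_sameBox hpR hq hpq with hqR | ⟨hLA, hqb⟩
  · exact Or.inl ⟨q, hqR, rfl⟩
  · exact Or.inr ⟨hLA, hw, by rwa [abs_add_tmap_zpow]⟩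

/-- If `v ∈ M ∖ ∂M` and `w ∈ M` are at finite interleaving distance and `v ∈ T^k(R)`
for one of the eight invariant regions `R`, then either `w ∈ T^k(R)`, or `R` is `L°`
or `A°` and `w ∈ ∂M`. -/
theorem regions_separated (Λ : ℝ) (hΛ : 0 < Λ) (φ : ℝ → ℝ) (hφmono : StrictMono φ)
    (hφrange : Set.range φ = Set.Ioo (-Λ) Λ)
    (flow : ℝ → ℝ × ℝ → ℝ × ℝ)
    (hflowS : ∀ ε : ℝ, 0 ≤ ε → ∀ k : ℤ, ∀ p ∈ Sset Λ,
      flow ε ((Tmap Λ ^ k) p) =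
        (Tmap Λ ^ k) (rhoFlow Λ φ (-ε) p.1, rhoFlow Λ φ ε p.2))
    (hflowL : ∀ ε : ℝ, 0 ≤ ε → ∀ k : ℤ, ∀ p ∈ Lset Λ,
      flow ε ((Tmap Λ ^ k) p) =
        (Tmap Λ ^ k) (-(2 * Λ) - rhoFlow Λ φ ε (-(2 * Λ) - p.1), rhoFlow Λ φ ε p.2))
    (hflowA : ∀ ε : ℝ, 0 ≤ ε → ∀ k : ℤ, ∀ p ∈ Aset Λ,
      flow ε ((Tmap Λ ^ k) p) =
        (Tmap Λ ^ k) (rhoFlow Λ φ (-ε) p.1, 2 * Λ - rhoFlow Λ φ (-ε) (2 * Λ - p.2)))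
    (v w : ℝ × ℝ) (hv : v ∈ Mstrip Λ) (hvb : v ∉ bdryM Λ) (hw : w ∈ Mstrip Λ)
    (hd : dInt flow v w ≠ ⊤) (k : ℤ) (R : Set (ℝ × ℝ))
    (hR : R = SsetInt Λ ∨ R = LsetInt Λ ∨ R = AsetInt Λ ∨
      R = Set.Ioo (-Λ) Λ ×ˢ ({-Λ} : Set ℝ) ∨ R = Set.Ioo (-Λ) Λ ×ˢ ({Λ} : Set ℝ) ∨
      R = ({-Λ} : Set ℝ) ×ˢ Set.Ioo (-Λ) Λ ∨ R = ({Λ} : Set ℝ) ×ˢ Set.Ioo (-Λ) Λ ∨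
      R = ({(Λ, -Λ)} : Set (ℝ × ℝ)))
    (hvR : v ∈ (Tmap Λ ^ k) '' R) :
    w ∈ (Tmap Λ ^ k) '' R ∨ ((R = LsetInt Λ ∨ R = AsetInt Λ) ∧ w ∈ bdryM Λ) :=
  regions_separated_general Λ hΛ φ hφmono hφrange flow hflowS hflowL hflowA v w hw hd k R hR hvR
end
end
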